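/- arXiv:quant-ph/0512224 — 7 statements merged into one kernel-verified Lean document; each statement's English description precedes it below -/
import Mathlib

section
/- Let d ≥ 1 and let ρ be a density matrix on ℂ^d ⊗ ℂ^d with G-concurrence G(ρ) > 0. If there exists a trace-preserving separable operation Λ, given by a finite family of pairs of d×d complex matrices (A_i, B_i) with Σ_i (A_i ⊗ B_i)† (A_i ⊗ B_i) = 1 and Λ(ρ) = Σ_i (A_i ⊗ B_i) ρ (A_i ⊗ B_i)†, such that Λ(ρ) = V ρ V†, then there exist d×d unitary matrices U_A and U_B such that (U_A ⊗ U_B) ρ (U_A ⊗ U_B)† = V ρ V†. -/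
open Matrix Kronecker
open scoped Classical ComplexOrder

noncomputable section

abbrev Idx (d : ℕ) := Fin d × Fin d

/-- Partial trace over the second factor. -/
def trB {d : ℕ} (M : Matrix (Idx d) (Idx d) ℂ) : Matrix (Fin d) (Fin d) ℂ :=
  fun i j => ∑ k, M (i, k) (j, k)

/-- Rank-one projector-like matrix `ψψ†` on the bipartite space. -/
def outer {d : ℕ} (ψ : Idx d → ℂ) : Matrix (Idx d) (Idx d) ℂ :=
  Matrix.vecMulVec ψ (fun x => (starRingEnd ℂ) (ψ x))

/-- Pure-state G-concurrence `g(ψ) = d (det Tr_B ψψ†)^{1/d}`. -/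
def gPure (d : ℕ) (ψ : Idx d → ℂ) : ℝ :=
  (d : ℝ) * ((trB (outer ψ)).det.re) ^ ((1 : ℝ) / d)

/-- Mixed-state G-concurrence via the convex roof. -/
def Gconc (d : ℕ) (ρ : Matrix (Idx d) (Idx d) ℂ) : ℝ :=
  sInf { r : ℝ | ∃ (m : ℕ) (q : Fin m → ℝ) (ψ : Fin m → (Idx d → ℂ)),
    (∀ j, 0 ≤ q j) ∧ (∀ j, ∑ x, Complex.normSq (ψ j x) = 1) ∧
    ρ = ∑ j, (q j : ℂ) • outer (ψ j) ∧
    r = ∑ j, q j * gPure d (ψ j) }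

/-- The swap unitary `V(x ⊗ y) = y ⊗ x`. -/
def swapV (d : ℕ) : Matrix (Idx d) (Idx d) ℂ :=
  fun x y => if x.1 = y.2 ∧ x.2 = y.1 then 1 else 0

namespace SwapProof

variable {d : ℕ}

/-- The set over which the convex-roof infimum is taken. -/
def GSet (d : ℕ) (ρ : Matrix (Idx d) (Idx d) ℂ) : Set ℝ :=
  { r : ℝ | ∃ (m : ℕ) (q : Fin m → ℝ) (ψ : Fin m → (Idx d → ℂ)),
    (∀ j, 0 ≤ q j) ∧ (∀ j, ∑ x, Complex.normSq (ψ j x) = 1) ∧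
    ρ = ∑ j, (q j : ℂ) • outer (ψ j) ∧
    r = ∑ j, q j * gPure d (ψ j) }

lemma Gconc_eq (ρ : Matrix (Idx d) (Idx d) ℂ) : Gconc d ρ = sInf (GSet d ρ) := rfl

def matOf (ψ : Idx d → ℂ) : Matrix (Fin d) (Fin d) ℂ := Matrix.of fun i k => ψ (i, k)

lemma trB_outer (ψ : Idx d → ℂ) : trB (outer ψ) = matOf ψ * (matOf ψ)ᴴ := by
  ext i j
  simp [trB, outer, matOf, Matrix.mul_apply, Matrix.vecMulVec_apply,
    Matrix.conjTranspose_apply]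

lemma det_trB_outer (ψ : Idx d → ℂ) : (trB (outer ψ)).det.re = ‖(matOf ψ).det‖ ^ 2 := by
  rw [trB_outer, Matrix.det_mul, Matrix.det_conjTranspose]
  rw [show star (matOf ψ).det = (starRingEnd ℂ) (matOf ψ).det from rfl]
  rw [Complex.mul_conj]
  simp [Complex.normSq_eq_norm_sq, ← Complex.ofReal_pow]

lemma gPure_eq (ψ : Idx d → ℂ) :
    gPure d ψ = (d : ℝ) * (‖(matOf ψ).det‖ ^ 2) ^ ((1 : ℝ) / d) := by
  rw [gPure, det_trB_outer]

lemma gPure_nonneg (ψ : Idx d → ℂ) : 0 ≤ gPure d ψ := by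
  rw [gPure_eq]; positivity

-- outer lemmas
lemma outer_apply (ψ : Idx d → ℂ) (x y : Idx d) :
    outer ψ x y = ψ x * (starRingEnd ℂ) (ψ y) := rfl

lemma outer_zero : outer (0 : Idx d → ℂ) = 0 := by
  ext x y; simp [outer_apply]

lemma outer_smul (c : ℂ) (ψ : Idx d → ℂ) :
    outer (c • ψ) = (c * (starRingEnd ℂ) c) • outer ψ := by
  ext x y
  simp [outer_apply, Matrix.smul_apply, Pi.smul_apply, smul_eq_mul, _root_.map_mul]
  ring

lemma outer_conj_mulVec (M : Matrix (Idx d) (Idx d) ℂ) (ψ : Idx d → ℂ) :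
    M * outer ψ * Mᴴ = outer (M *ᵥ ψ) := by
  ext x y
  simp only [outer_apply, Matrix.mul_apply, Matrix.conjTranspose_apply,
    Matrix.mulVec, dotProduct, Finset.sum_mul, Finset.mul_sum, map_sum, _root_.map_mul,
    Complex.star_def]
  apply Finset.sum_congr rfl
  intro u _
  apply Finset.sum_congr rfl
  intro v _
  ring

lemma matOf_smul (c : ℂ) (ψ : Idx d → ℂ) : matOf (c • ψ) = c • matOf ψ := by
  ext i k; simp [matOf]

lemma matOf_zero : matOf (0 : Idx d → ℂ) = 0 := by ext; simp [matOf]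

lemma gPure_zero (hd : 1 ≤ d) : gPure d (0 : Idx d → ℂ) = 0 := by
  have : (0:ℕ) < d := hd
  have hne : Nonempty (Fin d) := ⟨⟨0, this⟩⟩
  rw [gPure_eq, matOf_zero, Matrix.det_zero]
  rw [norm_zero]
  rw [show ((0:ℝ)^2) = 0 by ring, Real.zero_rpow (by positivity : (1:ℝ)/d ≠ 0)]
  ring

lemma gPure_smul_real (hd : 1 ≤ d) (c : ℝ) (hc : 0 ≤ c) (ψ : Idx d → ℂ) :
    gPure d ((c : ℂ) • ψ) = c ^ 2 * gPure d ψ := by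
  have hd0 : (d:ℝ) ≠ 0 := by positivity
  rw [gPure_eq, gPure_eq, matOf_smul, Matrix.det_smul]
  rw [norm_mul, norm_pow, mul_pow]
  rw [Complex.norm_real, Real.norm_of_nonneg hc]
  rw [← pow_mul]
  rw [Real.mul_rpow (by positivity) (by positivity)]
  rw [Fintype.card_fin]
  rw [← Real.rpow_natCast c (d*2), ← Real.rpow_mul hc]
  push_cast
  rw [show ((d:ℝ) * 2 * (1/d)) = 2 by field_simp]
  rw [Real.rpow_two]
  ring


lemma matOf_kron_mulVec (A B : Matrix (Fin d) (Fin d) ℂ) (ψ : Idx d → ℂ) :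
    matOf ((A ⊗ₖ B) *ᵥ ψ) = A * matOf ψ * Bᵀ := by
  ext i k
  simp only [matOf, Matrix.of_apply, Matrix.mulVec, dotProduct,
    Matrix.kroneckerMap_apply, Matrix.mul_apply, Matrix.transpose_apply,
    Fintype.sum_prod_type, Finset.sum_mul, Finset.mul_sum]
  rw [Finset.sum_comm]
  apply Finset.sum_congr rfl; intro j _
  apply Finset.sum_congr rfl; intro l _
  ring

lemma kron_conjTranspose (A B : Matrix (Fin d) (Fin d) ℂ) :
    (A ⊗ₖ B)ᴴ = Aᴴ ⊗ₖ Bᴴ := by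
  ext x y
  simp [Matrix.conjTranspose_apply, Matrix.kroneckerMap_apply, Complex.star_def, mul_comm]

lemma swapV_conjTranspose : (swapV d)ᴴ = swapV d := by
  ext x y
  simp only [Matrix.conjTranspose_apply, swapV, Complex.star_def]
  by_cases h : y.1 = x.2 ∧ y.2 = x.1
  · rw [if_pos h, if_pos ⟨h.2.symm, h.1.symm⟩]; exact map_one (starRingEnd ℂ)
  · rw [if_neg h, if_neg (fun hc => h ⟨hc.2.symm, hc.1.symm⟩)]
    exact map_zero (starRingEnd ℂ)

lemma swapV_mul_swapV : swapV d * swapV d = 1 := by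
  ext x y
  rw [Matrix.mul_apply]
  rw [Finset.sum_eq_single (x.2, x.1)]
  · simp [swapV, Matrix.one_apply, Prod.ext_iff, and_comm]
  · intro z _ hz
    have : ¬(x.1 = z.2 ∧ x.2 = z.1) := fun hc => hz (Prod.ext hc.2.symm hc.1.symm)
    simp [swapV, this]
  · intro hx; exact absurd (Finset.mem_univ _) hx

lemma swapV_mulVec (ψ : Idx d → ℂ) (x : Idx d) :
    (swapV d *ᵥ ψ) x = ψ (x.2, x.1) := by
  rw [Matrix.mulVec, dotProduct]
  rw [Finset.sum_eq_single (x.2, x.1)]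
  · simp [swapV]
  · intro z _ hz
    have : ¬(x.1 = z.2 ∧ x.2 = z.1) := fun hc => hz (Prod.ext hc.2.symm hc.1.symm)
    simp [swapV, this]
  · intro hx; exact absurd (Finset.mem_univ _) hx

lemma matOf_swap_mulVec (ψ : Idx d → ℂ) :
    matOf (swapV d *ᵥ ψ) = (matOf ψ)ᵀ := by
  ext i k
  simp [matOf, swapV_mulVec, Matrix.transpose_apply]

lemma gPure_swap (ψ : Idx d → ℂ) : gPure d (swapV d *ᵥ ψ) = gPure d ψ := by
  rw [gPure_eq, gPure_eq, matOf_swap_mulVec, Matrix.det_transpose]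

lemma GSet_nonneg {M : Matrix (Idx d) (Idx d) ℂ} {r : ℝ} (hr : r ∈ GSet d M) : 0 ≤ r := by
  obtain ⟨n, q, ψ, h0, h1, h2, h3⟩ := hr
  rw [h3]
  exact Finset.sum_nonneg fun j _ => mul_nonneg (h0 j) (gPure_nonneg _)

lemma GSet_bddBelow (M : Matrix (Idx d) (Idx d) ℂ) : BddBelow (GSet d M) :=
  ⟨0, fun _ hr => GSet_nonneg hr⟩

lemma Gconc_nonneg (M : Matrix (Idx d) (Idx d) ℂ) : 0 ≤ Gconc d M :=
  Real.sInf_nonneg fun _ hr => GSet_nonneg hr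

lemma sum_gPure_mem (hd : 1 ≤ d) {ι : Type} [Fintype ι] (φ : ι → Idx d → ℂ) :
    (∑ k, gPure d (φ k)) ∈ GSet d (∑ k, outer (φ k)) := by
  classical
  have hd0 : (0:ℕ) < d := hd
  set x₀ : Idx d := (⟨0, hd0⟩, ⟨0, hd0⟩) with hx₀
  set e0 : Idx d → ℂ := fun x => if x = x₀ then 1 else 0 with he0
  have he0unit : ∑ x, Complex.normSq (e0 x) = 1 := by
    rw [Finset.sum_eq_single x₀]
    · simp [he0]
    · intro z _ hz; simp [he0, hz]
    · intro hx; exact absurd (Finset.mem_univ _) hx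
  set nn : ι → ℝ := fun k => ∑ x, Complex.normSq (φ k x) with hnn
  have hnn0 : ∀ k, 0 ≤ nn k := fun k => Finset.sum_nonneg fun _ _ => Complex.normSq_nonneg _
  have hzero : ∀ k, nn k = 0 → φ k = 0 := by
    intro k hk; funext x
    have := (Finset.sum_eq_zero_iff_of_nonneg
      (fun x _ => Complex.normSq_nonneg (φ k x))).1 hk x (Finset.mem_univ x)
    exact Complex.normSq_eq_zero.mp this
  set ψ' : ι → Idx d → ℂ := fun k =>
    if nn k = 0 then e0 else (((Real.sqrt (nn k))⁻¹ : ℝ) : ℂ) • φ k with hψ'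
  set e := Fintype.equivFin ι
  refine ⟨Fintype.card ι, fun j => nn (e.symm j), fun j => ψ' (e.symm j),
    fun j => hnn0 _, ?_, ?_, ?_⟩
  · have main : ∀ k, ∑ x, Complex.normSq (ψ' k x) = 1 := by
      intro k
      by_cases h : nn k = 0
      · simp only [hψ', if_pos h]
        exact he0unit
      · have hpos : 0 < nn k := lt_of_le_of_ne (hnn0 k) (Ne.symm h)
        simp only [hψ', if_neg h]
        have hx : ∀ x, Complex.normSq (((((Real.sqrt (nn k))⁻¹ : ℝ) : ℂ) • φ k) x)
            = (nn k)⁻¹ * Complex.normSq (φ k x) := by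
          intro x
          rw [Pi.smul_apply, smul_eq_mul, Complex.normSq_mul, Complex.normSq_ofReal]
          rw [← Real.sqrt_inv, Real.mul_self_sqrt (by positivity)]
        rw [Finset.sum_congr rfl fun x _ => hx x, ← Finset.mul_sum]
        field_simp [hnn]
        rfl
    exact fun j => main (e.symm j)
  · have main : ∀ k, ((nn k : ℝ) : ℂ) • outer (ψ' k) = outer (φ k) := by
      intro k
      by_cases h : nn k = 0
      · simp [hψ', h, hzero k h, outer_zero]
      · have hpos : 0 < nn k := lt_of_le_of_ne (hnn0 k) (Ne.symm h)
        simp only [hψ', if_neg h]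
        rw [outer_smul]
        rw [Complex.conj_ofReal, ← Complex.ofReal_mul, ← Real.sqrt_inv,
          Real.mul_self_sqrt (by positivity), smul_smul, ← Complex.ofReal_mul,
          mul_inv_cancel₀ h, Complex.ofReal_one, one_smul]
    have h1 : (∑ k, outer (φ k)) = ∑ k, ((nn k : ℝ) : ℂ) • outer (ψ' k) :=
      (Finset.sum_congr rfl fun k _ => (main k).symm)
    exact h1.trans (Equiv.sum_comp e.symm (fun k => ((nn k : ℝ) : ℂ) • outer (ψ' k))).symm
  · have main : ∀ k, nn k * gPure d (ψ' k) = gPure d (φ k) := by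
      intro k
      by_cases h : nn k = 0
      · simp only [hψ', if_pos h]
        rw [hzero k h, gPure_zero hd, h, zero_mul]
      · have hpos : 0 < nn k := lt_of_le_of_ne (hnn0 k) (Ne.symm h)
        simp only [hψ', if_neg h]
        rw [gPure_smul_real hd _ (by positivity)]
        rw [← Real.sqrt_inv, Real.sq_sqrt (by positivity)]
        field_simp
    have h1 : (∑ k, gPure d (φ k)) = ∑ k, nn k * gPure d (ψ' k) :=
      (Finset.sum_congr rfl fun k _ => (main k).symm)
    exact h1.trans (Equiv.sum_comp e.symm (fun k => nn k * gPure d (ψ' k))).symm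

lemma mem_GSet_swap {M : Matrix (Idx d) (Idx d) ℂ} {r : ℝ} (hr : r ∈ GSet d M) :
    r ∈ GSet d (swapV d * M * (swapV d)ᴴ) := by
  obtain ⟨n, q, ψ, h0, h1, h2, h3⟩ := hr
  refine ⟨n, q, fun j => swapV d *ᵥ ψ j, h0, ?_, ?_, ?_⟩
  · intro j
    rw [← h1 j]
    exact Fintype.sum_equiv (Equiv.prodComm (Fin d) (Fin d)) _ _
      (fun x => by show Complex.normSq ((swapV d *ᵥ ψ j) x) = _; rw [swapV_mulVec]; rfl)
  · rw [h2, Matrix.mul_sum, Matrix.sum_mul]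
    apply Finset.sum_congr rfl
    intro j _
    rw [Matrix.mul_smul, Matrix.smul_mul, outer_conj_mulVec]
  · rw [h3]
    exact Finset.sum_congr rfl fun j _ => by rw [gPure_swap]

lemma GSet_nonempty (hd : 1 ≤ d) {M : Matrix (Idx d) (Idx d) ℂ} (hpsd : M.PosSemidef) :
    (GSet d M).Nonempty := by
  obtain ⟨Bm, hB⟩ : ∃ Bm : Matrix (Idx d) (Idx d) ℂ, M = Bmᴴ * Bm := by
    open scoped MatrixOrder in exact CStarAlgebra.nonneg_iff_eq_star_mul_self.mp hpsd.nonneg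
  have : M = ∑ k : Idx d, outer (fun i => (starRingEnd ℂ) (Bm k i)) := by
    rw [hB]; ext i j
    rw [Matrix.sum_apply, Matrix.mul_apply]
    apply Finset.sum_congr rfl
    intro k _
    rw [outer_apply, Matrix.conjTranspose_apply]
    simp [mul_comm]
  exact ⟨_, this ▸ sum_gPure_mem hd _⟩

lemma gPure_kron_mulVec (A B : Matrix (Fin d) (Fin d) ℂ) (ψ : Idx d → ℂ) :
    gPure d ((A ⊗ₖ B) *ᵥ ψ)
      = (‖A.det‖ ^ 2) ^ ((1:ℝ)/d) * ((‖B.det‖ ^ 2) ^ ((1:ℝ)/d) * gPure d ψ) := by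
  rw [gPure_eq, gPure_eq, matOf_kron_mulVec, Matrix.det_mul, Matrix.det_mul,
    Matrix.det_transpose, norm_mul, norm_mul, mul_pow, mul_pow,
    Real.mul_rpow (by positivity) (by positivity),
    Real.mul_rpow (by positivity) (by positivity)]
  ring

lemma GSet_kraus (hd : 1 ≤ d) {m : ℕ} (A B : Fin m → Matrix (Fin d) (Fin d) ℂ)
    {M : Matrix (Idx d) (Idx d) ℂ} {r : ℝ} (hr : r ∈ GSet d M) :
    (∑ i, (‖(A i).det‖ ^ 2) ^ ((1:ℝ)/d) * (‖(B i).det‖ ^ 2) ^ ((1:ℝ)/d)) * r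
      ∈ GSet d (∑ i, (A i ⊗ₖ B i) * M * (A i ⊗ₖ B i)ᴴ) := by
  classical
  obtain ⟨n, q, ψ, h0, h1, h2, h3⟩ := hr
  set φ : (Fin m × Fin n) → Idx d → ℂ :=
    fun p => ((Real.sqrt (q p.2) : ℝ) : ℂ) • ((A p.1 ⊗ₖ B p.1) *ᵥ ψ p.2) with hφ
  have key := sum_gPure_mem hd φ
  have hout : ∀ p : Fin m × Fin n,
      outer (φ p) = (q p.2 : ℂ) • outer ((A p.1 ⊗ₖ B p.1) *ᵥ ψ p.2) := by
    intro p
    rw [hφ, outer_smul, Complex.conj_ofReal, ← Complex.ofReal_mul,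
      Real.mul_self_sqrt (h0 p.2)]
  have hsum : (∑ p : Fin m × Fin n, outer (φ p))
      = ∑ i, (A i ⊗ₖ B i) * M * (A i ⊗ₖ B i)ᴴ := by
    rw [Fintype.sum_prod_type]
    apply Finset.sum_congr rfl
    intro i _
    rw [h2, Matrix.mul_sum, Matrix.sum_mul]
    apply Finset.sum_congr rfl
    intro j _
    rw [hout ⟨i, j⟩, Matrix.mul_smul, Matrix.smul_mul, outer_conj_mulVec]
  have hval : (∑ p : Fin m × Fin n, gPure d (φ p))
      = (∑ i, (‖(A i).det‖ ^ 2) ^ ((1:ℝ)/d) * (‖(B i).det‖ ^ 2) ^ ((1:ℝ)/d)) * r := by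
    rw [Fintype.sum_prod_type, h3, Finset.sum_mul]
    apply Finset.sum_congr rfl
    intro i _
    rw [Finset.mul_sum]
    apply Finset.sum_congr rfl
    intro j _
    rw [hφ]
    simp only []
    rw [gPure_smul_real hd _ (Real.sqrt_nonneg _), Real.sq_sqrt (h0 j),
      gPure_kron_mulVec]
    ring
  rw [hsum, hval] at key
  exact key

def tau {n : Type} [Fintype n] (X : Matrix n n ℂ) : ℝ := ∑ j, ∑ i, Complex.normSq (X i j)

lemma tau_nonneg {n : Type} [Fintype n] (X : Matrix n n ℂ) : 0 ≤ tau X :=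
  Finset.sum_nonneg fun _ _ => Finset.sum_nonneg fun _ _ => Complex.normSq_nonneg _

lemma tau_eq_zero {n : Type} [Fintype n] {X : Matrix n n ℂ} (h : tau X = 0) : X = 0 := by
  ext i j
  have h1 := (Finset.sum_eq_zero_iff_of_nonneg
    (fun j _ => Finset.sum_nonneg fun i _ => Complex.normSq_nonneg (X i j))).1 h j
    (Finset.mem_univ j)
  have h2 := (Finset.sum_eq_zero_iff_of_nonneg
    (fun i _ => Complex.normSq_nonneg (X i j))).1 h1 i (Finset.mem_univ i)
  simpa using Complex.normSq_eq_zero.mp h2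

lemma trace_conjT_mul_self {n : Type} [Fintype n] (X : Matrix n n ℂ) :
    Matrix.trace (Xᴴ * X) = ((tau X : ℝ) : ℂ) := by
  rw [Matrix.trace, tau]
  push_cast
  apply Finset.sum_congr rfl
  intro j _
  rw [Matrix.diag_apply, Matrix.mul_apply]
  apply Finset.sum_congr rfl
  intro i _
  rw [Matrix.conjTranspose_apply, Complex.star_def, mul_comm, Complex.mul_conj]

lemma amgm_aux (hd : 1 ≤ d) (X : Matrix (Fin d) (Fin d) ℂ) :
    (‖X.det‖ ^ 2 = ∏ i, ((Matrix.posSemidef_conjTranspose_mul_self X).1.eigenvalues i))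
    ∧ (tau X = ∑ i, ((Matrix.posSemidef_conjTranspose_mul_self X).1.eigenvalues i)) := by
  set hH := (Matrix.posSemidef_conjTranspose_mul_self X).1
  set ev := hH.eigenvalues with hevdef
  constructor
  · have h1 : (Xᴴ * X).det = ∏ i, ((ev i : ℝ) : ℂ) := hH.det_eq_prod_eigenvalues
    rw [Matrix.det_mul, Matrix.det_conjTranspose, Complex.star_def, mul_comm,
      Complex.mul_conj] at h1
    have h1' : ((Complex.normSq X.det : ℝ) : ℂ) = ((∏ i, ev i : ℝ) : ℂ) := by
      rw [h1]; push_cast; rfl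
    have := Complex.ofReal_injective h1'
    rw [← this, Complex.normSq_eq_norm_sq]
  · have h2 : Matrix.trace (Xᴴ * X) = ∑ i, ((ev i : ℝ) : ℂ) := by
      conv_lhs => rw [hH.spectral_theorem]
      rw [Unitary.conjStarAlgAut_apply, Matrix.trace_mul_cycle]
      rw [show (star (hH.eigenvectorUnitary : Matrix (Fin d) (Fin d) ℂ)) *
          (hH.eigenvectorUnitary : Matrix (Fin d) (Fin d) ℂ) = 1 from
        Matrix.mem_unitaryGroup_iff'.mp hH.eigenvectorUnitary.2]
      rw [one_mul, Matrix.trace_diagonal]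
      rfl
    rw [trace_conjT_mul_self] at h2
    exact Complex.ofReal_injective (h2.trans (by push_cast; rfl))

lemma amgm (hd : 1 ≤ d) (X : Matrix (Fin d) (Fin d) ℂ) :
    (‖X.det‖ ^ 2) ^ ((1:ℝ)/d) ≤ tau X / d := by
  classical
  obtain ⟨hdet, htr⟩ := amgm_aux hd X
  set ev := (Matrix.posSemidef_conjTranspose_mul_self X).1.eigenvalues
  have hev : ∀ i, 0 ≤ ev i := (Matrix.posSemidef_conjTranspose_mul_self X).eigenvalues_nonneg
  have hdR : (0:ℝ) < d := by exact_mod_cast hd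
  rw [hdet, htr]
  by_cases hzero : ∃ i, ev i = 0
  · obtain ⟨i0, hi0⟩ := hzero
    rw [Finset.prod_eq_zero (Finset.mem_univ i0) hi0,
      Real.zero_rpow (by positivity : (1:ℝ)/d ≠ 0)]
    have : 0 ≤ ∑ i, ev i := Finset.sum_nonneg fun i _ => hev i
    positivity
  · push_neg at hzero
    have hpos : ∀ i, 0 < ev i := fun i => lt_of_le_of_ne (hev i) (Ne.symm (hzero i))
    have hP : 0 < ∏ i, ev i := Finset.prod_pos fun i _ => hpos i
    have hgm : (∏ i, ev i) ^ ((1:ℝ)/d)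
        = Real.exp (∑ i, ((1:ℝ)/d) • Real.log (ev i)) := by
      rw [Real.rpow_def_of_pos hP, Real.log_prod (fun i _ => (hpos i).ne')]
      rw [mul_comm, Finset.mul_sum]
      simp [smul_eq_mul]
    have hw1 : ∑ _i : Fin d, ((1:ℝ)/d) = 1 := by
      rw [Finset.sum_const, Finset.card_univ, Fintype.card_fin, nsmul_eq_mul]
      field_simp
    have hj := convexOn_exp.map_sum_le (t := Finset.univ)
      (w := fun _ : Fin d => (1:ℝ)/d) (p := fun i => Real.log (ev i))
      (fun _ _ => by positivity) hw1 (fun _ _ => Set.mem_univ _)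
    rw [hgm]
    refine le_trans hj ?_
    rw [div_eq_mul_inv (∑ i, ev i), mul_comm (∑ i, ev i), Finset.mul_sum]
    apply le_of_eq
    apply Finset.sum_congr rfl
    intro i _
    rw [smul_eq_mul, Real.exp_log (hpos i)]
    ring

lemma amgm_eq (hd : 1 ≤ d) (X : Matrix (Fin d) (Fin d) ℂ)
    (heq : (‖X.det‖ ^ 2) ^ ((1:ℝ)/d) = tau X / d) (hpos : 0 < tau X) :
    Xᴴ * X = ((tau X / d : ℝ) : ℂ) • 1 := by
  classical
  obtain ⟨hdet, htr⟩ := amgm_aux hd X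
  set hH := (Matrix.posSemidef_conjTranspose_mul_self X).1 with hHdef
  set ev := hH.eigenvalues with hevdef
  have hev : ∀ i, 0 ≤ ev i := (Matrix.posSemidef_conjTranspose_mul_self X).eigenvalues_nonneg
  have hdR : (0:ℝ) < d := by exact_mod_cast hd
  have hzero : ¬ ∃ i, ev i = 0 := by
    rintro ⟨i0, hi0⟩
    rw [hdet, Finset.prod_eq_zero (Finset.mem_univ i0) hi0,
      Real.zero_rpow (by positivity : (1:ℝ)/d ≠ 0)] at heq
    have h0 : tau X = 0 := by
      have h' := heq.symm
      rw [div_eq_iff (ne_of_gt hdR)] at h'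
      simpa using h'
    exact absurd h0 (ne_of_gt hpos)
  push_neg at hzero
  have hposev : ∀ i, 0 < ev i := fun i => lt_of_le_of_ne (hev i) (Ne.symm (hzero i))
  have hP : 0 < ∏ i, ev i := Finset.prod_pos fun i _ => hposev i
  have hgm : (∏ i, ev i) ^ ((1:ℝ)/d)
      = Real.exp (∑ i, ((1:ℝ)/d) • Real.log (ev i)) := by
    rw [Real.rpow_def_of_pos hP, Real.log_prod (fun i _ => (hposev i).ne')]
    rw [mul_comm, Finset.mul_sum]
    simp [smul_eq_mul]
  have hw1 : ∑ _i : Fin d, ((1:ℝ)/d) = 1 := by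
    rw [Finset.sum_const, Finset.card_univ, Fintype.card_fin, nsmul_eq_mul]
    field_simp
  have hAM : (∑ i, ((1:ℝ)/d) • Real.exp (Real.log (ev i))) = tau X / d := by
    rw [htr, div_eq_mul_inv (∑ i, ev i), mul_comm (∑ i, ev i), Finset.mul_sum]
    apply Finset.sum_congr rfl
    intro i _
    rw [smul_eq_mul, Real.exp_log (hposev i)]
    ring
  have hle : ∑ i, ((1:ℝ)/d) • Real.exp (Real.log (ev i))
      ≤ Real.exp (∑ i, ((1:ℝ)/d) • Real.log (ev i)) := by
    rw [hAM, ← hgm, ← hdet, heq]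
  have hconstlog := strictConvexOn_exp.eq_of_le_map_sum
    (fun _ _ => by positivity) hw1 (fun _ _ => Set.mem_univ _) hle
  -- all eigenvalues are equal
  have hconst : ∀ i j, ev i = ev j := by
    intro i j
    have := hconstlog (Finset.mem_univ i) (Finset.mem_univ j)
    calc ev i = Real.exp (Real.log (ev i)) := (Real.exp_log (hposev i)).symm
    _ = Real.exp (Real.log (ev j)) := by rw [this]
    _ = ev j := Real.exp_log (hposev j)
  have hval : ∀ i, ev i = tau X / d := by
    intro i
    have : tau X = ∑ j, ev j := htr
    have hsum : tau X = (d : ℝ) * ev i := by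
      rw [this, Finset.sum_congr rfl fun j _ => hconst j i, Finset.sum_const,
        Finset.card_univ, Fintype.card_fin, nsmul_eq_mul]
    rw [hsum]
    field_simp
  have hdiag : Matrix.diagonal ((Complex.ofReal ∘ ev)) = ((tau X / d : ℝ) : ℂ) • 1 := by
    have hfun : (Complex.ofReal ∘ ev) = fun _ : Fin d => ((tau X / d : ℝ) : ℂ) := by
      funext i
      simp only [Function.comp_apply, hval i]
    rw [hfun, Matrix.smul_one_eq_diagonal]
  calc Xᴴ * X = (hH.eigenvectorUnitary : Matrix (Fin d) (Fin d) ℂ)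
        * Matrix.diagonal ((Complex.ofReal ∘ ev))
        * (star (hH.eigenvectorUnitary : Matrix (Fin d) (Fin d) ℂ)) := hH.spectral_theorem
  _ = ((tau X / d : ℝ) : ℂ) • 1 := by
      rw [hdiag, Matrix.mul_smul, Matrix.smul_mul, Matrix.mul_one,
        Matrix.mem_unitaryGroup_iff.mp hH.eigenvectorUnitary.2]

lemma exists_fix {k : ℕ} (p : Fin k → ℝ) (hp : ∀ i, 0 ≤ p i) (hp1 : ∑ i, p i = 1)
    (T : Fin k → Matrix (Idx d) (Idx d) ℂ)
    (hT : ∀ i, (T i)ᴴ * T i = 1)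
    (ρ : Matrix (Idx d) (Idx d) ℂ)
    (hρ : ρ = ∑ i, ((p i : ℝ) : ℂ) • (T i * ρ * (T i)ᴴ)) :
    ∃ i, 0 < p i ∧ T i * ρ * (T i)ᴴ = ρ := by
  classical
  set S : Fin k → Matrix (Idx d) (Idx d) ℂ := fun i => T i * ρ * (T i)ᴴ with hS
  set t0 : ℂ := Matrix.trace (ρᴴ * ρ) with ht0
  have hSnorm : ∀ i, Matrix.trace ((S i)ᴴ * S i) = t0 := by
    intro i
    have : (S i)ᴴ * S i = T i * (ρᴴ * ρ) * (T i)ᴴ := by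
      rw [hS]
      simp only [Matrix.conjTranspose_mul, Matrix.conjTranspose_conjTranspose,
        Matrix.mul_assoc]
      rw [← Matrix.mul_assoc ((T i)ᴴ) (T i), hT i, Matrix.one_mul]
    rw [this, Matrix.trace_mul_cycle, ← Matrix.mul_assoc, hT i, Matrix.one_mul]
  have hsump : (∑ i, ((p i : ℝ) : ℂ)) = 1 := by
    rw [← Complex.ofReal_sum, hp1, Complex.ofReal_one]
  have hc : ∑ i, ((p i : ℝ) : ℂ) * Matrix.trace ((ρ - S i)ᴴ * (ρ - S i)) = 0 := by
    have hexp : ∀ i, Matrix.trace ((ρ - S i)ᴴ * (ρ - S i))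
        = t0 - Matrix.trace (ρᴴ * S i) - Matrix.trace ((S i)ᴴ * ρ) + t0 := by
      intro i
      rw [Matrix.conjTranspose_sub, Matrix.sub_mul, Matrix.mul_sub, Matrix.mul_sub,
        Matrix.trace_sub, Matrix.trace_sub, Matrix.trace_sub, hSnorm i, ht0]
      ring
    rw [Finset.sum_congr rfl fun i _ => by rw [hexp i]]
    have e1 : ∑ i, ((p i : ℝ) : ℂ) * (t0 - Matrix.trace (ρᴴ * S i)
        - Matrix.trace ((S i)ᴴ * ρ) + t0)
        = (∑ i, ((p i : ℝ) : ℂ)) * (2 * t0)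
          - (∑ i, ((p i : ℝ) : ℂ) * Matrix.trace (ρᴴ * S i))
          - (∑ i, ((p i : ℝ) : ℂ) * Matrix.trace ((S i)ᴴ * ρ)) := by
      rw [Finset.sum_mul, ← Finset.sum_sub_distrib, ← Finset.sum_sub_distrib]
      apply Finset.sum_congr rfl
      intro i _
      ring
    rw [e1, hsump, one_mul]
    have e2 : (∑ i, ((p i : ℝ) : ℂ) * Matrix.trace (ρᴴ * S i)) = t0 := by
      have hmul := congrArg (fun M => ρᴴ * M) hρ
      have : ρᴴ * ρ = ∑ i, ((p i : ℝ) : ℂ) • (ρᴴ * S i) := by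
        rw [hmul, Matrix.mul_sum]
        apply Finset.sum_congr rfl
        intro i _
        rw [Matrix.mul_smul]
      rw [ht0, this, Matrix.trace_sum]
      apply Finset.sum_congr rfl
      intro i _
      rw [Matrix.trace_smul, smul_eq_mul]
    have e3 : (∑ i, ((p i : ℝ) : ℂ) * Matrix.trace ((S i)ᴴ * ρ)) = t0 := by
      have hmul := congrArg (fun M => Mᴴ * ρ) hρ
      have : ρᴴ * ρ = ∑ i, ((p i : ℝ) : ℂ) • ((S i)ᴴ * ρ) := by
        rw [hmul, Matrix.conjTranspose_sum, Matrix.sum_mul]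
        apply Finset.sum_congr rfl
        intro i _
        rw [Matrix.conjTranspose_smul, Matrix.smul_mul]
        congr 2
        rw [Complex.star_def, Complex.conj_ofReal]
      rw [ht0, this, Matrix.trace_sum]
      apply Finset.sum_congr rfl
      intro i _
      rw [Matrix.trace_smul, smul_eq_mul]
    rw [e2, e3]
    ring
  have hreal : ∑ i, p i * tau (ρ - S i) = 0 := by
    have : ((∑ i, p i * tau (ρ - S i) : ℝ) : ℂ) = 0 := by
      push_cast
      rw [← hc]
      apply Finset.sum_congr rfl
      intro i _
      rw [trace_conjT_mul_self]
    exact_mod_cast this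
  have hterm : ∀ i ∈ Finset.univ, p i * tau (ρ - S i) = 0 :=
    (Finset.sum_eq_zero_iff_of_nonneg
      (fun i _ => mul_nonneg (hp i) (tau_nonneg _))).1 hreal
  have hex : ∃ i, p i ≠ 0 := by
    by_contra h
    push_neg at h
    rw [Finset.sum_congr rfl fun i _ => h i, Finset.sum_const, smul_zero] at hp1
    exact one_ne_zero hp1.symm
  obtain ⟨i, hi⟩ := hex
  refine ⟨i, lt_of_le_of_ne (hp i) (Ne.symm hi), ?_⟩
  have := hterm i (Finset.mem_univ i)
  rcases mul_eq_zero.mp this with h | h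
  · exact absurd h hi
  · have := tau_eq_zero h
    rw [sub_eq_zero] at this
    exact this.symm

end SwapProof

open SwapProof in
set_option maxHeartbeats 1000000 in
theorem swap_by_LOCC_implies_swap_by_product_unitary
    (d : ℕ) (hd : 1 ≤ d)
    (ρ : Matrix (Idx d) (Idx d) ℂ) (hpsd : ρ.PosSemidef) (htr : ρ.trace = 1)
    (hG : 0 < Gconc d ρ)
    (m : ℕ) (A B : Fin m → Matrix (Fin d) (Fin d) ℂ)
    (hTP : ∑ i, (A i ⊗ₖ B i)ᴴ * (A i ⊗ₖ B i) = 1)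
    (hΛ : ∑ i, (A i ⊗ₖ B i) * ρ * (A i ⊗ₖ B i)ᴴ = swapV d * ρ * (swapV d)ᴴ) :
    ∃ U W : Matrix (Fin d) (Fin d) ℂ,
      U ∈ Matrix.unitaryGroup (Fin d) ℂ ∧ W ∈ Matrix.unitaryGroup (Fin d) ℂ ∧
      (U ⊗ₖ W) * ρ * (U ⊗ₖ W)ᴴ = swapV d * ρ * (swapV d)ᴴ := by
  classical
  have hdR : (0:ℝ) < d := by exact_mod_cast hd
  have hGdef : Gconc d ρ = sInf (GSet d ρ) := rfl
  have hne : (GSet d ρ).Nonempty := GSet_nonempty hd hpsd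
  have hVV : swapV d * (swapV d * ρ * (swapV d)ᴴ) * (swapV d)ᴴ = ρ := by
    rw [swapV_conjTranspose]
    have : swapV d * (swapV d * ρ * swapV d) * swapV d
        = (swapV d * swapV d) * ρ * (swapV d * swapV d) := by
      simp only [Matrix.mul_assoc]
    rw [this, swapV_mul_swapV, Matrix.one_mul, Matrix.mul_one]
  obtain ⟨r0, hr0⟩ := hne
  have hne : (GSet d ρ).Nonempty := ⟨r0, hr0⟩
  have hσne : (GSet d (swapV d * ρ * (swapV d)ᴴ)).Nonempty := ⟨r0, mem_GSet_swap hr0⟩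
  have hρ_le_σ : Gconc d ρ ≤ Gconc d (swapV d * ρ * (swapV d)ᴴ) := by
    apply le_csInf hσne
    intro r hr
    have h2 := mem_GSet_swap hr
    rw [hVV] at h2
    exact csInf_le (GSet_bddBelow ρ) h2
  have hmono : ∀ r ∈ GSet d ρ,
      Gconc d (swapV d * ρ * (swapV d)ᴴ)
        ≤ (∑ i, (‖(A i).det‖ ^ 2) ^ ((1:ℝ)/d) * (‖(B i).det‖ ^ 2) ^ ((1:ℝ)/d)) * r := by
    intro r hr
    have h3 := GSet_kraus hd A B hr
    rw [hΛ] at h3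
    exact csInf_le (GSet_bddBelow _) h3
  have hkey : ∀ r ∈ GSet d ρ,
      Gconc d ρ ≤ (∑ i, (‖(A i).det‖ ^ 2) ^ ((1:ℝ)/d) * (‖(B i).det‖ ^ 2) ^ ((1:ℝ)/d)) * r :=
    fun r hr => le_trans hρ_le_σ (hmono r hr)
  have hC0 : (0:ℝ) ≤ ∑ i, (‖(A i).det‖ ^ 2) ^ ((1:ℝ)/d) * (‖(B i).det‖ ^ 2) ^ ((1:ℝ)/d) :=
    Finset.sum_nonneg fun i _ => by positivity
  have hC1 : 1 ≤ ∑ i, (‖(A i).det‖ ^ 2) ^ ((1:ℝ)/d) * (‖(B i).det‖ ^ 2) ^ ((1:ℝ)/d) := by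
    rcases eq_or_lt_of_le hC0 with h0 | h0
    · exfalso
      obtain ⟨r, hr⟩ := hne
      have := hkey r hr
      rw [← h0, zero_mul] at this
      linarith
    · have hdiv : ∀ r ∈ GSet d ρ,
          Gconc d ρ / (∑ i, (‖(A i).det‖ ^ 2) ^ ((1:ℝ)/d) * (‖(B i).det‖ ^ 2) ^ ((1:ℝ)/d)) ≤ r := by
        intro r hr
        rw [div_le_iff₀ h0]
        calc Gconc d ρ ≤ _ * r := hkey r hr
        _ = r * _ := by ring
      have h4 := le_csInf hne hdiv
      rw [← hGdef, div_le_iff₀ h0] at h4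
      nlinarith
  -- trace identity
  have htr2 : ∑ i, tau (A i) * tau (B i) = (d:ℝ) * d := by
    have h := congrArg Matrix.trace hTP
    rw [Matrix.trace_sum] at h
    have hterm : ∀ i, Matrix.trace ((A i ⊗ₖ B i)ᴴ * (A i ⊗ₖ B i))
        = (((tau (A i) * tau (B i) : ℝ)) : ℂ) := by
      intro i
      rw [kron_conjTranspose, ← Matrix.mul_kronecker_mul, Matrix.trace_kronecker,
        trace_conjT_mul_self, trace_conjT_mul_self, ← Complex.ofReal_mul]
    rw [Finset.sum_congr rfl fun i _ => hterm i] at h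
    have h1 : Matrix.trace (1 : Matrix (Idx d) (Idx d) ℂ) = (((d:ℝ) * d : ℝ) : ℂ) := by
      rw [Matrix.trace_one]
      push_cast
      simp [Fintype.card_prod]
    rw [h1] at h
    rw [← Complex.ofReal_sum] at h
    exact_mod_cast h
  set p : Fin m → ℝ := fun i => tau (A i) * tau (B i) / ((d:ℝ)*d) with hpdef
  have hp0 : ∀ i, 0 ≤ p i := fun i => by
    rw [hpdef]
    have := tau_nonneg (A i); have := tau_nonneg (B i)
    positivity
  have hp1 : ∑ i, p i = 1 := by
    rw [hpdef, ← Finset.sum_div, htr2]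
    field_simp
  have hbound : ∀ i,
      (‖(A i).det‖ ^ 2) ^ ((1:ℝ)/d) * (‖(B i).det‖ ^ 2) ^ ((1:ℝ)/d) ≤ p i := by
    intro i
    have h1 := amgm hd (A i)
    have h2 := amgm hd (B i)
    have hB0 : (0:ℝ) ≤ (‖(B i).det‖ ^ 2) ^ ((1:ℝ)/d) := by positivity
    have htB : 0 ≤ tau (B i) := tau_nonneg _
    have htA : 0 ≤ tau (A i) := tau_nonneg _
    calc (‖(A i).det‖ ^ 2) ^ ((1:ℝ)/d) * (‖(B i).det‖ ^ 2) ^ ((1:ℝ)/d)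
        ≤ (tau (A i) / d) * (tau (B i) / d) :=
          mul_le_mul h1 h2 hB0 (by positivity)
    _ = p i := by simp only [hpdef]; rw [div_mul_div_comm]
  have hterm_eq : ∀ i,
      (‖(A i).det‖ ^ 2) ^ ((1:ℝ)/d) * (‖(B i).det‖ ^ 2) ^ ((1:ℝ)/d) = p i := by
    intro i
    by_contra hne'
    have hlt : (‖(A i).det‖ ^ 2) ^ ((1:ℝ)/d) * (‖(B i).det‖ ^ 2) ^ ((1:ℝ)/d) < p i :=
      lt_of_le_of_ne (hbound i) hne'
    have hsumlt : ∑ j, (‖(A j).det‖ ^ 2) ^ ((1:ℝ)/d) * (‖(B j).det‖ ^ 2) ^ ((1:ℝ)/d)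
        < ∑ j, p j :=
      Finset.sum_lt_sum (fun j _ => hbound j) ⟨i, Finset.mem_univ i, hlt⟩
    rw [hp1] at hsumlt
    linarith
  -- per-index unitaries
  have key : ∀ i, ∃ (Ui Wi : Matrix (Fin d) (Fin d) ℂ),
      Ui ∈ Matrix.unitaryGroup (Fin d) ℂ ∧ Wi ∈ Matrix.unitaryGroup (Fin d) ℂ ∧
      (A i ⊗ₖ B i) * ρ * (A i ⊗ₖ B i)ᴴ
        = ((p i : ℝ) : ℂ) • ((Ui ⊗ₖ Wi) * ρ * (Ui ⊗ₖ Wi)ᴴ) := by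
    intro i
    by_cases hA0 : tau (A i) = 0
    · refine ⟨1, 1, Submonoid.one_mem _, Submonoid.one_mem _, ?_⟩
      have hp0' : p i = 0 := by rw [hpdef]; simp [hA0]
      rw [show A i = 0 from tau_eq_zero hA0, hp0']
      simp [Matrix.zero_kronecker]
    by_cases hB0 : tau (B i) = 0
    · refine ⟨1, 1, Submonoid.one_mem _, Submonoid.one_mem _, ?_⟩
      have hp0' : p i = 0 := by rw [hpdef]; simp [hB0]
      rw [show B i = 0 from tau_eq_zero hB0, hp0']
      simp [Matrix.kronecker_zero]
    have hApos : 0 < tau (A i) := lt_of_le_of_ne (tau_nonneg _) (Ne.symm hA0)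
    have hBpos : 0 < tau (B i) := lt_of_le_of_ne (tau_nonneg _) (Ne.symm hB0)
    have h1 := amgm hd (A i)
    have h2 := amgm hd (B i)
    have hcA0 : (0:ℝ) ≤ (‖(A i).det‖ ^ 2) ^ ((1:ℝ)/d) := by positivity
    have hcB0 : (0:ℝ) ≤ (‖(B i).det‖ ^ 2) ^ ((1:ℝ)/d) := by positivity
    have htAp : 0 < tau (A i) / d := by positivity
    have htBp : 0 < tau (B i) / d := by positivity
    have hprod : (‖(A i).det‖ ^ 2) ^ ((1:ℝ)/d) * (‖(B i).det‖ ^ 2) ^ ((1:ℝ)/d)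
        = (tau (A i) / d) * (tau (B i) / d) := by
      simp only [hterm_eq i, hpdef]
      rw [div_mul_div_comm]
    have heqA : (‖(A i).det‖ ^ 2) ^ ((1:ℝ)/d) = tau (A i) / d := by
      apply le_antisymm h1
      nlinarith
    have heqB : (‖(B i).det‖ ^ 2) ^ ((1:ℝ)/d) = tau (B i) / d := by
      apply le_antisymm h2
      nlinarith
    have hAmat : (A i)ᴴ * A i = ((tau (A i) / d : ℝ) : ℂ) • 1 := amgm_eq hd (A i) heqA hApos
    have hBmat : (B i)ᴴ * B i = ((tau (B i) / d : ℝ) : ℂ) • 1 := amgm_eq hd (B i) heqB hBpos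
    set α := tau (A i) / d with hα
    set β := tau (B i) / d with hβ
    set Ui : Matrix (Fin d) (Fin d) ℂ := (((Real.sqrt α)⁻¹ : ℝ) : ℂ) • A i with hUi
    set Wi : Matrix (Fin d) (Fin d) ℂ := (((Real.sqrt β)⁻¹ : ℝ) : ℂ) • B i with hWi
    have hsqα : (0:ℝ) < Real.sqrt α := Real.sqrt_pos.mpr htAp
    have hsqβ : (0:ℝ) < Real.sqrt β := Real.sqrt_pos.mpr htBp
    have hUiu : Uiᴴ * Ui = 1 := by
      rw [hUi, Matrix.conjTranspose_smul, Matrix.smul_mul, Matrix.mul_smul, hAmat,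
        smul_smul, smul_smul]
      have hco : ((Real.sqrt α)⁻¹ * (Real.sqrt α)⁻¹ * α : ℝ) = 1 := by
        rw [← mul_inv, Real.mul_self_sqrt (le_of_lt htAp)]
        exact inv_mul_cancel₀ (ne_of_gt htAp)
      rw [Complex.star_def, Complex.conj_ofReal, ← Complex.ofReal_mul, ← Complex.ofReal_mul,
        hco, Complex.ofReal_one, one_smul]
    have hWiu : Wiᴴ * Wi = 1 := by
      rw [hWi, Matrix.conjTranspose_smul, Matrix.smul_mul, Matrix.mul_smul, hBmat,
        smul_smul, smul_smul]
      have hco : ((Real.sqrt β)⁻¹ * (Real.sqrt β)⁻¹ * β : ℝ) = 1 := by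
        rw [← mul_inv, Real.mul_self_sqrt (le_of_lt htBp)]
        exact inv_mul_cancel₀ (ne_of_gt htBp)
      rw [Complex.star_def, Complex.conj_ofReal, ← Complex.ofReal_mul, ← Complex.ofReal_mul,
        hco, Complex.ofReal_one, one_smul]
    refine ⟨Ui, Wi, Matrix.mem_unitaryGroup_iff'.mpr hUiu, Matrix.mem_unitaryGroup_iff'.mpr hWiu, ?_⟩
    have hAeq : A i = ((Real.sqrt α : ℝ) : ℂ) • Ui := by
      rw [hUi, smul_smul, ← Complex.ofReal_mul, mul_inv_cancel₀ (ne_of_gt hsqα)]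
      simp
    have hBeq : B i = ((Real.sqrt β : ℝ) : ℂ) • Wi := by
      rw [hWi, smul_smul, ← Complex.ofReal_mul, mul_inv_cancel₀ (ne_of_gt hsqβ)]
      simp
    have hkron : (A i ⊗ₖ B i) = ((Real.sqrt α * Real.sqrt β : ℝ) : ℂ) • (Ui ⊗ₖ Wi) := by
      rw [hAeq, hBeq, Matrix.smul_kronecker, Matrix.kronecker_smul, smul_smul,
        ← Complex.ofReal_mul]
    rw [hkron, Matrix.conjTranspose_smul, Matrix.smul_mul, Matrix.smul_mul, Matrix.mul_smul,
      smul_smul]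
    congr 1
    rw [Complex.star_def, Complex.conj_ofReal, ← Complex.ofReal_mul]
    congr 1
    simp only [hpdef]
    have hre : Real.sqrt α * Real.sqrt β * (Real.sqrt α * Real.sqrt β)
        = (Real.sqrt α * Real.sqrt α) * (Real.sqrt β * Real.sqrt β) := by ring
    rw [hre, Real.mul_self_sqrt (le_of_lt htAp), Real.mul_self_sqrt (le_of_lt htBp),
      hα, hβ, div_mul_div_comm]
  choose U W hU hW hKraus using key
  have hswap : swapV d * ρ * (swapV d)ᴴ
      = ∑ i, ((p i : ℝ) : ℂ) • ((U i ⊗ₖ W i) * ρ * (U i ⊗ₖ W i)ᴴ) := by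
    rw [← hΛ]
    exact Finset.sum_congr rfl fun i _ => hKraus i
  set T : Fin m → Matrix (Idx d) (Idx d) ℂ := fun i => swapV d * (U i ⊗ₖ W i) with hT
  have hTu : ∀ i, (T i)ᴴ * T i = 1 := by
    intro i
    rw [hT]
    simp only [Matrix.conjTranspose_mul, swapV_conjTranspose]
    have : (U i ⊗ₖ W i)ᴴ * swapV d * (swapV d * (U i ⊗ₖ W i))
        = (U i ⊗ₖ W i)ᴴ * (swapV d * swapV d) * (U i ⊗ₖ W i) := by
      simp only [Matrix.mul_assoc]
    rw [this, swapV_mul_swapV, Matrix.mul_one, kron_conjTranspose,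
      ← Matrix.mul_kronecker_mul]
    rw [show (U i)ᴴ * U i = 1 from Matrix.mem_unitaryGroup_iff'.mp (hU i),
      show (W i)ᴴ * W i = 1 from Matrix.mem_unitaryGroup_iff'.mp (hW i),
      Matrix.one_kronecker_one]
  have hρeq : ρ = ∑ i, ((p i : ℝ) : ℂ) • (T i * ρ * (T i)ᴴ) := by
    conv_lhs => rw [← hVV]
    rw [hswap, Matrix.mul_sum, Matrix.sum_mul]
    apply Finset.sum_congr rfl
    intro i _
    rw [Matrix.mul_smul, Matrix.smul_mul]
    congr 1
    rw [hT]
    simp only [Matrix.conjTranspose_mul, swapV_conjTranspose, Matrix.mul_assoc]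
  obtain ⟨i, hpi, hfix⟩ := exists_fix p hp0 hp1 T hTu ρ hρeq
  refine ⟨U i, W i, hU i, hW i, ?_⟩
  have hfix' : swapV d * ((U i ⊗ₖ W i) * ρ * (U i ⊗ₖ W i)ᴴ) * (swapV d)ᴴ = ρ := by
    have h6 : swapV d * ((U i ⊗ₖ W i) * ρ * (U i ⊗ₖ W i)ᴴ) * (swapV d)ᴴ
        = T i * ρ * (T i)ᴴ := by
      rw [hT]
      simp only [Matrix.conjTranspose_mul, swapV_conjTranspose, Matrix.mul_assoc]
    rw [h6, hfix]
  have h5 := congrArg (fun X => swapV d * X * (swapV d)ᴴ) hfix'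
  simp only [] at h5
  rw [← h5, swapV_conjTranspose]
  have : swapV d * (swapV d * ((U i ⊗ₖ W i) * ρ * (U i ⊗ₖ W i)ᴴ) * swapV d) * swapV d
      = (swapV d * swapV d) * ((U i ⊗ₖ W i) * ρ * (U i ⊗ₖ W i)ᴴ) * (swapV d * swapV d) := by
    simp only [Matrix.mul_assoc]
  rw [this, swapV_mul_swapV, Matrix.one_mul, Matrix.mul_one]
end
end

section
/- Let d ≥ 1, let ρ be a density matrix on ℂ^d ⊗ ℂ^d, and let (A_i, B_i)_{i∈I} be a finite family of pairs of d×d complex matrices with Σ_i (A_i ⊗ B_i)† (A_i ⊗ B_i) = 1. For each i set p_i = Tr((A_i ⊗ B_i) ρ (A_i ⊗ B_i)†) (a nonnegative real) and, when p_i > 0, set σ_i = (1/p_i) (A_i ⊗ B_i) ρ (A_i ⊗ B_i)†. Then Σ_{i : p_i > 0} p_i · G(σ_i) ≤ (Σ_i |det A_i|^{1/d} |det B_i|^{1/d}) · G(ρ). -/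
/-!
Reading a bipartite vector ψ as its d × d coefficient matrix Ψ, the pure-state concurrence is
g(ψ) = d |det Ψ|^{2/d}. A product operator A ⊗ B sends Ψ to A Ψ Bᵀ, so it multiplies g by
(|det A| |det B|)^{2/d}, and g(c ψ) = |c|² g(ψ). Pushing any decomposition of ρ through A ⊗ B and
renormalizing the resulting vectors thus decomposes (A ⊗ B) ρ (A ⊗ B)† = p σ at cost
(|det A| |det B|)^{2/d} times the cost of the original one. The weights of a decomposition are
not required to sum to 1, so G is positively homogeneous and p G(σ) ≤ (|det A| |det B|)^{2/d} G(ρ).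
Finally the completeness relation gives (A ⊗ B)†(A ⊗ B) ≤ 1, so |det A| |det B| ≤ 1 and the
exponent 2/d may be lowered to 1/d.
-/

open Matrix Kronecker
open scoped Classical ComplexOrder

noncomputable section

namespace Matrix

variable {n : Type*} [Fintype n] [DecidableEq n]

lemma det_conjTranspose_mul_self (M : Matrix n n ℂ) : (Mᴴ * M).det = Complex.normSq M.det := by
  rw [det_mul, det_conjTranspose, Complex.star_def, mul_comm, Complex.mul_conj]

open scoped MatrixOrder in
lemma PosSemidef.exists_eq_mul_conjTranspose {P : Matrix n n ℂ} (hP : P.PosSemidef) :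
    ∃ B : Matrix n n ℂ, P = B * Bᴴ := by
  refine ⟨CFC.sqrt P, ?_⟩
  rw [← star_eq_conjTranspose, (CFC.sqrt_nonneg P).isSelfAdjoint.star_eq,
    CFC.sqrt_mul_sqrt_self P hP.nonneg]

lemma IsHermitian.eigenvalues_le_one {P : Matrix n n ℂ} (hP : P.IsHermitian)
    (h : (1 - P).PosSemidef) (i : n) : hP.eigenvalues i ≤ 1 := by
  have hunit : star ⇑(hP.eigenvectorBasis i) ⬝ᵥ ⇑(hP.eigenvectorBasis i) = 1 := by
    rw [dotProduct_comm, ← EuclideanSpace.inner_eq_star_dotProduct,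
      inner_self_eq_norm_sq_to_K, hP.eigenvectorBasis.orthonormal.1 i]
    norm_num
  have hquad := h.re_dotProduct_nonneg (hP.eigenvectorBasis i)
  rw [sub_mulVec, one_mulVec, dotProduct_sub, map_sub, hunit, ← hP.eigenvalues_eq] at hquad
  simpa using hquad

lemma PosSemidef.det_le_one {P : Matrix n n ℂ} (hP : P.PosSemidef) (h : (1 - P).PosSemidef) :
    P.det ≤ 1 := by
  rw [hP.1.det_eq_prod_eigenvalues, ← RCLike.ofReal_prod, ← RCLike.ofReal_one,
    RCLike.ofReal_le_ofReal]
  exact Finset.prod_le_one (fun i _ => hP.eigenvalues_nonneg i)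
    (fun i _ => hP.1.eigenvalues_le_one h i)

lemma norm_det_le_one {N : Matrix n n ℂ} (h : (1 - Nᴴ * N).PosSemidef) : ‖N.det‖ ≤ 1 := by
  have hdet := (posSemidef_conjTranspose_mul_self N).det_le_one h
  rw [det_conjTranspose_mul_self, Complex.normSq_eq_norm_sq] at hdet
  exact (pow_le_one_iff_of_nonneg (norm_nonneg _) two_ne_zero).mp (by exact_mod_cast hdet)

lemma posSemidef_one_sub_of_sum_eq_one {ι : Type*} [Fintype ι] (N : ι → Matrix n n ℂ)
    (h : ∑ j, (N j)ᴴ * N j = 1) (i : ι) : (1 - (N i)ᴴ * N i).PosSemidef := by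
  rw [← h, ← Finset.add_sum_erase _ _ (Finset.mem_univ i), add_sub_cancel_left]
  exact posSemidef_sum _ fun j _ => posSemidef_conjTranspose_mul_self _

end Matrix

lemma norm_det_mul_norm_det_le_one {d : ℕ} (hd : 0 < d) {A B : Matrix (Fin d) (Fin d) ℂ}
    (h : ‖(A ⊗ₖ B).det‖ ≤ 1) : ‖A.det‖ * ‖B.det‖ ≤ 1 := by
  rw [det_kronecker, Fintype.card_fin, norm_mul, norm_pow, norm_pow, ← mul_pow] at h
  exact (pow_le_one_iff_of_nonneg (by positivity) hd.ne').mp h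

lemma rpow_normSq_mul_normSq_le {a b : ℂ} (hab : ‖a‖ * ‖b‖ ≤ 1) {s : ℝ} (hs : 0 ≤ s) :
    (Complex.normSq a * Complex.normSq b) ^ s ≤ ‖a‖ ^ s * ‖b‖ ^ s := by
  have hsq : Complex.normSq a * Complex.normSq b ≤ ‖a‖ * ‖b‖ := by
    rw [Complex.normSq_eq_norm_sq, Complex.normSq_eq_norm_sq, ← mul_pow]
    exact pow_le_of_le_one (by positivity) hab two_ne_zero
  rw [← Real.mul_rpow (norm_nonneg a) (norm_nonneg b)]
  exact Real.rpow_le_rpow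
    (mul_nonneg (Complex.normSq_nonneg a) (Complex.normSq_nonneg b)) hsq hs

section PureStates

variable {d : ℕ}

def coeffMatrix (ψ : Idx d → ℂ) : Matrix (Fin d) (Fin d) ℂ := Matrix.of fun i k => ψ (i, k)

lemma trB_outer (ψ : Idx d → ℂ) : trB (outer ψ) = coeffMatrix ψ * (coeffMatrix ψ)ᴴ := by
  ext i j
  simp [trB, outer, coeffMatrix, mul_apply, vecMulVec_apply]

lemma gPure_eq_normSq_det (ψ : Idx d → ℂ) :
    gPure d ψ = d * Complex.normSq (coeffMatrix ψ).det ^ ((1 : ℝ) / d) := by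
  rw [gPure, trB_outer, det_mul_comm, det_conjTranspose_mul_self, Complex.ofReal_re]

lemma gPure_nonneg (ψ : Idx d → ℂ) : 0 ≤ gPure d ψ := by
  rw [gPure_eq_normSq_det]
  exact mul_nonneg d.cast_nonneg (Real.rpow_nonneg (Complex.normSq_nonneg _) _)

lemma gPure_smul (c : ℂ) (ψ : Idx d → ℂ) :
    gPure d (c • ψ) = Complex.normSq c * gPure d ψ := by
  rcases eq_or_ne d 0 with rfl | hd
  · simp [gPure]
  have hcoeff : coeffMatrix (c • ψ) = c • coeffMatrix ψ := rfl
  rw [gPure_eq_normSq_det, gPure_eq_normSq_det, hcoeff, det_smul, Fintype.card_fin, map_mul,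
    map_pow, Real.mul_rpow (pow_nonneg (Complex.normSq_nonneg c) d) (Complex.normSq_nonneg _),
    ← Real.rpow_natCast, ← Real.rpow_mul (Complex.normSq_nonneg c),
    mul_one_div_cancel (by exact_mod_cast hd), Real.rpow_one]
  ring

lemma coeffMatrix_kronecker_mulVec (A B : Matrix (Fin d) (Fin d) ℂ) (ψ : Idx d → ℂ) :
    coeffMatrix ((A ⊗ₖ B) *ᵥ ψ) = A * coeffMatrix ψ * Bᵀ := by
  rw [← transpose_inj, ← vec_inj]
  change (A ⊗ₖ B) *ᵥ vec (coeffMatrix ψ)ᵀ = _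
  rw [kronecker_mulVec_vec, transpose_mul, transpose_mul, transpose_transpose, Matrix.mul_assoc]

lemma gPure_kronecker_mulVec (A B : Matrix (Fin d) (Fin d) ℂ) (ψ : Idx d → ℂ) :
    gPure d ((A ⊗ₖ B) *ᵥ ψ)
      = (Complex.normSq A.det * Complex.normSq B.det) ^ ((1 : ℝ) / d) * gPure d ψ := by
  rw [gPure_eq_normSq_det, gPure_eq_normSq_det, coeffMatrix_kronecker_mulVec, det_mul, det_mul,
    det_transpose, map_mul, map_mul, mul_right_comm,
    Real.mul_rpow (mul_nonneg (Complex.normSq_nonneg _) (Complex.normSq_nonneg _))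
      (Complex.normSq_nonneg _)]
  ring

lemma outer_smul (c : ℂ) (ψ : Idx d → ℂ) :
    outer (c • ψ) = (Complex.normSq c : ℂ) • outer ψ := by
  ext x y
  simp only [outer, vecMulVec_apply, Pi.smul_apply, smul_eq_mul, map_mul, Matrix.smul_apply,
    Complex.normSq_eq_conj_mul_self]
  ring

lemma outer_mulVec (M : Matrix (Idx d) (Idx d) ℂ) (ψ : Idx d → ℂ) :
    outer (M *ᵥ ψ) = M * outer ψ * Mᴴ := by
  change vecMulVec (M *ᵥ ψ) (star (M *ᵥ ψ)) = M * vecMulVec ψ (star ψ) * Mᴴ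
  rw [star_mulVec, mul_vecMulVec, vecMulVec_mul]

lemma exists_smul_unit_vector (hd : 0 < d) (φ : Idx d → ℂ) :
    ∃ (c : ℂ) (ψ : Idx d → ℂ), ∑ x, Complex.normSq (ψ x) = 1 ∧ φ = c • ψ := by
  have hnonneg : ∀ x ∈ Finset.univ, 0 ≤ Complex.normSq (φ x) :=
    fun x _ => Complex.normSq_nonneg _
  rcases (Finset.sum_nonneg hnonneg).eq_or_lt with hn | hn
  · refine ⟨0, Pi.single (⟨0, hd⟩, ⟨0, hd⟩) 1, by simp [Pi.single_apply], ?_⟩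
    ext x
    simpa using (Finset.sum_eq_zero_iff_of_nonneg hnonneg).mp hn.symm x (Finset.mem_univ x)
  · set n := ∑ x, Complex.normSq (φ x)
    refine ⟨√n, ((√n : ℝ) : ℂ)⁻¹ • φ, ?_, ?_⟩
    · simp only [Pi.smul_apply, smul_eq_mul, Complex.normSq_mul, Complex.normSq_inv,
        Complex.normSq_ofReal, Real.mul_self_sqrt hn.le, ← Finset.mul_sum]
      exact inv_mul_cancel₀ hn.ne'
    · have hsqrt : ((√n : ℝ) : ℂ) ≠ 0 := Complex.ofReal_ne_zero.mpr (Real.sqrt_pos.mpr hn).ne'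
      rw [smul_smul, mul_inv_cancel₀ hsqrt, one_smul]

end PureStates

section ConvexRoof

open scoped Pointwise

variable {d : ℕ}

def roofValues (d : ℕ) (ρ : Matrix (Idx d) (Idx d) ℂ) : Set ℝ :=
  { r : ℝ | ∃ (m : ℕ) (q : Fin m → ℝ) (ψ : Fin m → (Idx d → ℂ)),
    (∀ j, 0 ≤ q j) ∧ (∀ j, ∑ x, Complex.normSq (ψ j x) = 1) ∧
    ρ = ∑ j, (q j : ℂ) • outer (ψ j) ∧
    r = ∑ j, q j * gPure d (ψ j) }

lemma Gconc_eq_sInf_roofValues (ρ : Matrix (Idx d) (Idx d) ℂ) :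
    Gconc d ρ = sInf (roofValues d ρ) := rfl

lemma nonneg_of_mem_roofValues {ρ : Matrix (Idx d) (Idx d) ℂ} {r : ℝ}
    (hr : r ∈ roofValues d ρ) : 0 ≤ r := by
  obtain ⟨m, q, ψ, hq, -, -, rfl⟩ := hr
  exact Finset.sum_nonneg fun j _ => mul_nonneg (hq j) (gPure_nonneg _)

lemma Gconc_nonneg (ρ : Matrix (Idx d) (Idx d) ℂ) : 0 ≤ Gconc d ρ :=
  Real.sInf_nonneg fun _ => nonneg_of_mem_roofValues

lemma Gconc_le_of_mem {ρ : Matrix (Idx d) (Idx d) ℂ} {r : ℝ} (hr : r ∈ roofValues d ρ) :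
    Gconc d ρ ≤ r :=
  csInf_le ⟨0, fun _ => nonneg_of_mem_roofValues⟩ hr

lemma le_mul_Gconc {ρ : Matrix (Idx d) (Idx d) ℂ} (hne : (roofValues d ρ).Nonempty)
    {c x : ℝ} (hc : 0 ≤ c) (h : ∀ r ∈ roofValues d ρ, x ≤ c * r) : x ≤ c * Gconc d ρ := by
  rw [Gconc_eq_sInf_roofValues, ← smul_eq_mul, ← Real.sInf_smul_of_nonneg hc]
  exact le_csInf hne.smul_set (by rintro _ ⟨r, hr, rfl⟩; exact h r hr)

lemma sum_gPure_mem_roofValues (hd : 0 < d) {ρ : Matrix (Idx d) (Idx d) ℂ} {m : ℕ}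
    (q : Fin m → ℝ) (hq : ∀ j, 0 ≤ q j) (φ : Fin m → Idx d → ℂ)
    (hρ : ρ = ∑ j, (q j : ℂ) • outer (φ j)) :
    ∑ j, q j * gPure d (φ j) ∈ roofValues d ρ := by
  choose c ψ hψ hφ using fun j => exists_smul_unit_vector hd (φ j)
  refine ⟨m, fun j => q j * Complex.normSq (c j), ψ,
    fun j => mul_nonneg (hq j) (Complex.normSq_nonneg _), hψ, ?_, ?_⟩
  · simp_rw [hρ, hφ, outer_smul, smul_smul, Complex.ofReal_mul]
  · simp_rw [hφ, gPure_smul, mul_assoc]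

lemma roofValues_nonempty (hd : 0 < d) {ρ : Matrix (Idx d) (Idx d) ℂ} (hρ : ρ.PosSemidef) :
    (roofValues d ρ).Nonempty := by
  obtain ⟨B, rfl⟩ := hρ.exists_eq_mul_conjTranspose
  have hcols : B * Bᴴ = ∑ k, outer (fun x => B x k) := by
    ext x y
    simp [mul_apply, outer, Matrix.sum_apply, vecMulVec_apply]
  refine ⟨_, sum_gPure_mem_roofValues hd (fun _ => 1) (fun _ => zero_le_one)
    (fun j x => B x ((Fintype.equivFin _).symm j)) ?_⟩
  rw [hcols, ← (Fintype.equivFin (Idx d)).symm.sum_comp]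
  simp

lemma smul_mem_roofValues {ρ : Matrix (Idx d) (Idx d) ℂ} {r t : ℝ} (ht : 0 ≤ t)
    (hr : r ∈ roofValues d ρ) : t * r ∈ roofValues d (t • ρ) := by
  obtain ⟨m, q, ψ, hq, hψ, rfl, rfl⟩ := hr
  refine ⟨m, fun j => t * q j, ψ, fun j => mul_nonneg ht (hq j), hψ, ?_, ?_⟩
  · simp_rw [Finset.smul_sum, Complex.ofReal_mul, mul_smul]
    rfl
  · simp_rw [Finset.mul_sum, mul_assoc]

lemma roofValues_smul (ρ : Matrix (Idx d) (Idx d) ℂ) {t : ℝ} (ht : 0 < t) :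
    roofValues d (t • ρ) = t • roofValues d ρ := by
  ext r
  constructor
  · intro hr
    refine ⟨t⁻¹ * r, ?_, by simp [ht.ne']⟩
    simpa [smul_smul, ht.ne'] using smul_mem_roofValues (inv_nonneg.mpr ht.le) hr
  · rintro ⟨r, hr, rfl⟩
    exact smul_mem_roofValues ht.le hr

lemma Gconc_smul (ρ : Matrix (Idx d) (Idx d) ℂ) {t : ℝ} (ht : 0 < t) :
    Gconc d (t • ρ) = t * Gconc d ρ := by
  rw [Gconc_eq_sInf_roofValues, roofValues_smul ρ ht, Real.sInf_smul_of_nonneg ht.le,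
    smul_eq_mul, Gconc_eq_sInf_roofValues]

lemma Gconc_kronecker_conj_le (hd : 0 < d) {ρ : Matrix (Idx d) (Idx d) ℂ} (hρ : ρ.PosSemidef)
    (A B : Matrix (Fin d) (Fin d) ℂ) :
    Gconc d ((A ⊗ₖ B) * ρ * (A ⊗ₖ B)ᴴ)
      ≤ (Complex.normSq A.det * Complex.normSq B.det) ^ ((1 : ℝ) / d) * Gconc d ρ := by
  refine le_mul_Gconc (roofValues_nonempty hd hρ) (Real.rpow_nonneg
    (mul_nonneg (Complex.normSq_nonneg _) (Complex.normSq_nonneg _)) _) fun r hr => ?_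
  obtain ⟨m, q, ψ, hq, -, rfl, rfl⟩ := hr
  have hmem := sum_gPure_mem_roofValues hd q hq (fun j => (A ⊗ₖ B) *ᵥ ψ j)
    (ρ := (A ⊗ₖ B) * (∑ j, (q j : ℂ) • outer (ψ j)) * (A ⊗ₖ B)ᴴ)
    (by simp_rw [Finset.mul_sum, Finset.sum_mul, mul_smul_comm, smul_mul_assoc, outer_mulVec])
  simp_rw [gPure_kronecker_mulVec, mul_left_comm _ (_ ^ _), ← Finset.mul_sum] at hmem
  exact Gconc_le_of_mem hmem

lemma mul_Gconc_inv_smul_kronecker_conj_le (hd : 0 < d) {ρ : Matrix (Idx d) (Idx d) ℂ}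
    (hρ : ρ.PosSemidef) {A B : Matrix (Fin d) (Fin d) ℂ}
    (hAB : (1 - (A ⊗ₖ B)ᴴ * (A ⊗ₖ B)).PosSemidef) {p : ℝ} (hp : 0 < p) :
    p * Gconc d (p⁻¹ • ((A ⊗ₖ B) * ρ * (A ⊗ₖ B)ᴴ))
      ≤ ‖A.det‖ ^ ((1 : ℝ) / d) * ‖B.det‖ ^ ((1 : ℝ) / d) * Gconc d ρ := by
  have hdet : ‖A.det‖ * ‖B.det‖ ≤ 1 := norm_det_mul_norm_det_le_one hd (norm_det_le_one hAB)
  calc p * Gconc d (p⁻¹ • ((A ⊗ₖ B) * ρ * (A ⊗ₖ B)ᴴ))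
      = Gconc d ((A ⊗ₖ B) * ρ * (A ⊗ₖ B)ᴴ) := by
        rw [Gconc_smul _ (inv_pos.mpr hp), mul_inv_cancel_left₀ hp.ne']
    _ ≤ (Complex.normSq A.det * Complex.normSq B.det) ^ ((1 : ℝ) / d) * Gconc d ρ :=
        Gconc_kronecker_conj_le hd hρ A B
    _ ≤ _ := mul_le_mul_of_nonneg_right (rpow_normSq_mul_normSq_le hdet (by positivity))
        (Gconc_nonneg ρ)

end ConvexRoof

theorem Gconc_separable_operation_bound_general
    (d : ℕ) (hd : 1 ≤ d)
    (ρ : Matrix (Idx d) (Idx d) ℂ) (hpsd : ρ.PosSemidef)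
    (m : ℕ) (A B : Fin m → Matrix (Fin d) (Fin d) ℂ)
    (hTP : ∑ i, (A i ⊗ₖ B i)ᴴ * (A i ⊗ₖ B i) = 1)
    (p : Fin m → ℝ)
    (σ : Fin m → Matrix (Idx d) (Idx d) ℂ)
    (hσ : ∀ i, 0 < p i → σ i = ((p i)⁻¹ : ℝ) • ((A i ⊗ₖ B i) * ρ * (A i ⊗ₖ B i)ᴴ)) :
    ∑ i ∈ Finset.univ.filter (fun i => 0 < p i), p i * Gconc d (σ i)
      ≤ (∑ i, ‖(A i).det‖ ^ ((1:ℝ)/d) * ‖(B i).det‖ ^ ((1:ℝ)/d))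
          * Gconc d ρ := by
  calc _ ≤ ∑ i ∈ Finset.univ.filter (fun i => 0 < p i),
        ‖(A i).det‖ ^ ((1:ℝ)/d) * ‖(B i).det‖ ^ ((1:ℝ)/d) * Gconc d ρ := by
        refine Finset.sum_le_sum fun i hi => ?_
        have hpi : 0 < p i := (Finset.mem_filter.mp hi).2
        rw [hσ i hpi]
        exact mul_Gconc_inv_smul_kronecker_conj_le hd hpsd
          (posSemidef_one_sub_of_sum_eq_one _ hTP i) hpi
    _ ≤ ∑ i, ‖(A i).det‖ ^ ((1:ℝ)/d) * ‖(B i).det‖ ^ ((1:ℝ)/d) * Gconc d ρ :=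
        Finset.sum_le_sum_of_subset_of_nonneg (Finset.filter_subset _ _)
          fun i _ _ => mul_nonneg (by positivity) (Gconc_nonneg ρ)
    _ = _ := (Finset.sum_mul _ _ _).symm

theorem Gconc_separable_operation_bound
    (d : ℕ) (hd : 1 ≤ d)
    (ρ : Matrix (Idx d) (Idx d) ℂ) (hpsd : ρ.PosSemidef) (htr : ρ.trace = 1)
    (m : ℕ) (A B : Fin m → Matrix (Fin d) (Fin d) ℂ)
    (hTP : ∑ i, (A i ⊗ₖ B i)ᴴ * (A i ⊗ₖ B i) = 1)
    (p : Fin m → ℝ)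
    (hp : ∀ i, (p i : ℂ) = ((A i ⊗ₖ B i) * ρ * (A i ⊗ₖ B i)ᴴ).trace)
    (σ : Fin m → Matrix (Idx d) (Idx d) ℂ)
    (hσ : ∀ i, 0 < p i → σ i = ((p i)⁻¹ : ℝ) • ((A i ⊗ₖ B i) * ρ * (A i ⊗ₖ B i)ᴴ)) :
    ∑ i ∈ Finset.univ.filter (fun i => 0 < p i), p i * Gconc d (σ i)
      ≤ (∑ i, ‖(A i).det‖ ^ ((1:ℝ)/d) * ‖(B i).det‖ ^ ((1:ℝ)/d))
          * Gconc d ρ :=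
  Gconc_separable_operation_bound_general d hd ρ hpsd m A B hTP p σ hσ
end
end

section
/- Let n ≥ 1 and let X be any n×n complex matrix. Then |det X|² ≤ (Tr(X† X).re / n)^n, and equality holds if and only if there exists a nonnegative real c such that X† X = c • 1. -/
/-!
`XᴴX` is positive semidefinite, with eigenvalues `λᵢ ≥ 0`, `|det X|² = ∏ λᵢ` and
`Tr (XᴴX) = ∑ λᵢ`, so the inequality is AM-GM for the `λᵢ`. Equality in AM-GM forces all `λᵢ`
to be equal, and by the spectral theorem a Hermitian matrix with a single eigenvalue `c` is `c • 1`.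
-/

open Matrix
open scoped ComplexOrder

namespace Real

variable {ι : Type*} [Fintype ι]

theorem prod_rpow_inv_card_pow (f : ι → ℝ) (hf : ∀ i, 0 ≤ f i) (hι : Fintype.card ι ≠ 0) :
    (∏ i, f i ^ (Fintype.card ι : ℝ)⁻¹) ^ Fintype.card ι = ∏ i, f i := by
  rw [← Finset.prod_pow]
  exact Finset.prod_congr rfl fun i _ => rpow_inv_natCast_pow (hf i) hι

theorem sum_div_card_eq_sum_inv_card_mul (f : ι → ℝ) :
    (∑ i, f i) / Fintype.card ι = ∑ i, (Fintype.card ι : ℝ)⁻¹ * f i := by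
  rw [← Finset.mul_sum, inv_mul_eq_div]

theorem sum_inv_card (hι : Fintype.card ι ≠ 0) : ∑ _i : ι, (Fintype.card ι : ℝ)⁻¹ = 1 := by
  simp [hι]

theorem prod_le_mean_pow (f : ι → ℝ) (hf : ∀ i, 0 ≤ f i) :
    ∏ i, f i ≤ ((∑ i, f i) / Fintype.card ι) ^ Fintype.card ι := by
  rcases eq_or_ne (Fintype.card ι) 0 with hι | hι
  · have : IsEmpty ι := Fintype.card_eq_zero_iff.mp hι
    simp
  rw [← prod_rpow_inv_card_pow f hf hι, sum_div_card_eq_sum_inv_card_mul]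
  exact pow_le_pow_left₀ (Finset.prod_nonneg fun i _ => rpow_nonneg (hf i) _)
    (geom_mean_le_arith_mean_weighted _ _ _ (fun _ _ => by positivity) (sum_inv_card hι)
      fun i _ => hf i) _

theorem prod_eq_mean_pow_iff (f : ι → ℝ) (hf : ∀ i, 0 ≤ f i) :
    ∏ i, f i = ((∑ i, f i) / Fintype.card ι) ^ Fintype.card ι ↔
      ∀ j, f j = (∑ i, f i) / Fintype.card ι := by
  rcases eq_or_ne (Fintype.card ι) 0 with hι | hι
  · have : IsEmpty ι := Fintype.card_eq_zero_iff.mp hι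
    simp
  rw [← prod_rpow_inv_card_pow f hf hι, sum_div_card_eq_sum_inv_card_mul,
    pow_left_inj₀ (Finset.prod_nonneg fun i _ => rpow_nonneg (hf i) _)
      (Finset.sum_nonneg fun i _ => mul_nonneg (by positivity) (hf i)) hι,
    geom_mean_eq_arith_mean_weighted_iff_of_pos' _ _ _ (fun _ _ => by positivity)
      (sum_inv_card hι) fun i _ => hf i]
  simp only [Finset.mem_univ, forall_const]
end Real
namespace Matrix

variable {𝕜 : Type*} [RCLike 𝕜] {n : Type*} [Fintype n] [DecidableEq n] {A : Matrix n n 𝕜}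

theorem IsHermitian.re_det_eq_prod_eigenvalues (hA : A.IsHermitian) :
    RCLike.re A.det = ∏ i, hA.eigenvalues i := by
  rw [hA.det_eq_prod_eigenvalues, ← RCLike.ofReal_prod, RCLike.ofReal_re]

theorem IsHermitian.re_trace_eq_sum_eigenvalues (hA : A.IsHermitian) :
    RCLike.re A.trace = ∑ i, hA.eigenvalues i := by
  rw [hA.trace_eq_sum_eigenvalues, ← RCLike.ofReal_sum, RCLike.ofReal_re]

theorem IsHermitian.eq_smul_one_of_eigenvalues_eq (hA : A.IsHermitian) {c : ℝ}
    (hc : ∀ i, hA.eigenvalues i = c) : A = (c : 𝕜) • 1 := by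
  have hdiag : diagonal (RCLike.ofReal ∘ hA.eigenvalues) = (c : 𝕜) • (1 : Matrix n n 𝕜) := by
    rw [smul_one_eq_diagonal]; congr 1; ext i; simp [hc i]
  rw [hA.spectral_theorem, hdiag, map_smul, map_one]

theorem det_conjTranspose_mul_self_s4 (X : Matrix n n 𝕜) : (Xᴴ * X).det = (‖X.det‖ ^ 2 : ℝ) := by
  rw [det_mul, det_conjTranspose, RCLike.star_def, RCLike.conj_mul]; norm_cast

theorem PosSemidef.re_det_le_trace_div_card_pow (hA : A.PosSemidef) :
    RCLike.re A.det ≤ (RCLike.re A.trace / Fintype.card n) ^ Fintype.card n := by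
  rw [hA.isHermitian.re_det_eq_prod_eigenvalues, hA.isHermitian.re_trace_eq_sum_eigenvalues]
  exact Real.prod_le_mean_pow _ hA.eigenvalues_nonneg

theorem PosSemidef.re_det_eq_trace_div_card_pow_iff (hA : A.PosSemidef) :
    RCLike.re A.det = (RCLike.re A.trace / Fintype.card n) ^ Fintype.card n ↔
      ∃ c : ℝ, 0 ≤ c ∧ A = (c : 𝕜) • 1 := by
  constructor
  · rw [hA.isHermitian.re_det_eq_prod_eigenvalues, hA.isHermitian.re_trace_eq_sum_eigenvalues,
      Real.prod_eq_mean_pow_iff _ hA.eigenvalues_nonneg]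
    intro h
    exact ⟨_, div_nonneg (Finset.sum_nonneg fun i _ => hA.eigenvalues_nonneg i) (Nat.cast_nonneg _),
      hA.isHermitian.eq_smul_one_of_eigenvalues_eq h⟩
  · rintro ⟨c, -, rfl⟩
    rcases eq_or_ne (Fintype.card n) 0 with hn | hn
    · simp [hn]
    · rw [trace_smul, trace_one, det_smul, det_one, smul_eq_mul, mul_one, ← RCLike.ofReal_natCast,
        ← RCLike.ofReal_mul, ← RCLike.ofReal_pow, RCLike.ofReal_re, RCLike.ofReal_re,
        mul_div_cancel_right₀ _ (Nat.cast_ne_zero.mpr hn)]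

end Matrix

theorem abs_det_sq_le_trace_div_pow_general
    (n : ℕ) (X : Matrix (Fin n) (Fin n) ℂ) :
    ‖X.det‖ ^ 2 ≤ ((Xᴴ * X).trace.re / n) ^ n ∧
    (‖X.det‖ ^ 2 = ((Xᴴ * X).trace.re / n) ^ n ↔
      ∃ c : ℝ, 0 ≤ c ∧ Xᴴ * X = (c : ℂ) • 1) := by
  have hA := posSemidef_conjTranspose_mul_self X
  have hdet : ‖X.det‖ ^ 2 = RCLike.re (Xᴴ * X).det := by
    rw [det_conjTranspose_mul_self_s4, RCLike.ofReal_re]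
  have hle := hA.re_det_le_trace_div_card_pow
  have heq := hA.re_det_eq_trace_div_card_pow_iff
  rw [Fintype.card_fin] at hle heq
  rw [hdet]
  exact ⟨hle, heq⟩

theorem abs_det_sq_le_trace_div_pow
    (n : ℕ) (hn : 1 ≤ n) (X : Matrix (Fin n) (Fin n) ℂ) :
    ‖X.det‖ ^ 2 ≤ ((Xᴴ * X).trace.re / n) ^ n ∧
    (‖X.det‖ ^ 2 = ((Xᴴ * X).trace.re / n) ^ n ↔
      ∃ c : ℝ, 0 ≤ c ∧ Xᴴ * X = (c : ℂ) • 1) :=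
  abs_det_sq_le_trace_div_pow_general n X
end

section
/- Let d ≥ 1, let ψ be a vector in ℂ^d ⊗ ℂ^d, and let A, B be d×d complex matrices. Then det(Tr_B[(A ⊗ B) ψψ† (A ⊗ B)†]) = |det A|² · |det B|² · det(Tr_B(ψψ†)). In particular, the pure-state G-concurrence g(ψ) = d · (det Tr_B(ψψ†))^{1/d} satisfies g((A⊗B)ψ) = |det A|^{2/d} |det B|^{2/d} g(ψ). -/
open Matrix Kronecker
open scoped Classical

noncomputable section

/-!
Write `ψ = vec Xᵀ`, i.e. `ψ (i, k) = X i k`. Then `Tr_B (ψψ†) = X Xᴴ`, so its determinant is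
`|det X|²`, and `(A ⊗ B) ψ = vec (A X Bᵀ)ᵀ`. Multiplicativity of the determinant gives
`|det (A X Bᵀ)|² = |det A|² |det B|² |det X|²`, and taking `d`-th roots gives the statement
about `gPure`.
-/

namespace Matrix

variable {m n : Type*} [Fintype n] {α : Type*} [Semiring α] [StarRing α]

theorem mul_vecMulVec_star_mul_conjTranspose (M : Matrix m n α) (v : n → α) :
    M * vecMulVec v (star v) * Mᴴ = vecMulVec (M *ᵥ v) (star (M *ᵥ v)) := by
  rw [mul_vecMulVec, vecMulVec_mul, vecMul_conjTranspose, star_star]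

end Matrix

theorem mul_outer_mul_conjTranspose {d : ℕ} (M : Matrix (Idx d) (Idx d) ℂ) (ψ : Idx d → ℂ) :
    M * outer ψ * Mᴴ = outer (M *ᵥ ψ) :=
  mul_vecMulVec_star_mul_conjTranspose M ψ

theorem trB_outer_vec_transpose {d : ℕ} (X : Matrix (Fin d) (Fin d) ℂ) :
    trB (outer (vec Xᵀ)) = X * Xᴴ := by
  ext i j
  simp [trB, outer, mul_apply, vecMulVec_apply]

theorem det_trB_outer_vec_transpose {d : ℕ} (X : Matrix (Fin d) (Fin d) ℂ) :
    (trB (outer (vec Xᵀ))).det = ((‖X.det‖ ^ 2 : ℝ) : ℂ) := by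
  rw [trB_outer_vec_transpose, det_mul, det_conjTranspose, Complex.star_def, Complex.mul_conj',
    Complex.ofReal_pow]

theorem kronecker_mulVec_vec_transpose {d : ℕ} (A B X : Matrix (Fin d) (Fin d) ℂ) :
    (A ⊗ₖ B) *ᵥ vec Xᵀ = vec (A * X * Bᵀ)ᵀ := by
  rw [kronecker_mulVec_vec, transpose_mul, transpose_mul, transpose_transpose, Matrix.mul_assoc]

theorem gPure_vec_transpose (d : ℕ) (X : Matrix (Fin d) (Fin d) ℂ) :
    gPure d (vec Xᵀ) = d * ‖X.det‖ ^ ((2 : ℝ) / d) := by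
  rw [gPure, det_trB_outer_vec_transpose, Complex.ofReal_re,
    ← Real.rpow_natCast_mul (norm_nonneg _), Nat.cast_ofNat, mul_one_div]

theorem gPure_of_product_operator_general
    (d : ℕ) (ψ : Idx d → ℂ) (A B : Matrix (Fin d) (Fin d) ℂ) :
    (trB ((A ⊗ₖ B) * outer ψ * (A ⊗ₖ B)ᴴ)).det
      = ((‖A.det‖ ^ 2 * ‖B.det‖ ^ 2 : ℝ) : ℂ) * (trB (outer ψ)).det ∧
    gPure d ((A ⊗ₖ B).mulVec ψ)
      = ‖A.det‖ ^ ((2:ℝ)/d) * ‖B.det‖ ^ ((2:ℝ)/d) * gPure d ψ := by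
  obtain ⟨X, rfl⟩ : ∃ X : Matrix (Fin d) (Fin d) ℂ, vec Xᵀ = ψ := ⟨of (Function.curry ψ), rfl⟩
  have hdet : ‖(A * X * Bᵀ).det‖ = ‖A.det‖ * ‖B.det‖ * ‖X.det‖ := by
    rw [det_mul, det_mul, det_transpose, norm_mul, norm_mul]
    ring
  constructor
  · rw [mul_outer_mul_conjTranspose, kronecker_mulVec_vec_transpose,
      det_trB_outer_vec_transpose, det_trB_outer_vec_transpose, hdet]
    push_cast
    ring
  · rw [kronecker_mulVec_vec_transpose, gPure_vec_transpose, gPure_vec_transpose, hdet,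
      Real.mul_rpow (by positivity) (norm_nonneg _), Real.mul_rpow (norm_nonneg _) (norm_nonneg _)]
    ring

theorem gPure_of_product_operator
    (d : ℕ) (hd : 1 ≤ d) (ψ : Idx d → ℂ) (A B : Matrix (Fin d) (Fin d) ℂ) :
    (trB ((A ⊗ₖ B) * outer ψ * (A ⊗ₖ B)ᴴ)).det
      = ((‖A.det‖ ^ 2 * ‖B.det‖ ^ 2 : ℝ) : ℂ) * (trB (outer ψ)).det ∧
    gPure d ((A ⊗ₖ B).mulVec ψ)
      = ‖A.det‖ ^ ((2:ℝ)/d) * ‖B.det‖ ^ ((2:ℝ)/d) * gPure d ψ :=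
  gPure_of_product_operator_general d ψ A B
end
end

section
/- Let ρ_1, …, ρ_m be n×n density matrices and p_1, …, p_m nonnegative reals with Σ_i p_i = 1. Then the von Neumann entropy is concave: S(Σ_i p_i ρ_i) ≥ Σ_i p_i S(ρ_i). -/
open Matrix
open scoped Classical ComplexOrder

noncomputable section

/-- The von Neumann entropy of a matrix, via the eigenvalues of the spectral theorem
(defined to be `0` on non-Hermitian matrices). -/
def vN {n : ℕ} (ρ : Matrix (Fin n) (Fin n) ℂ) : ℝ :=
  if h : ρ.IsHermitian then ∑ k, Real.negMulLog (h.eigenvalues k) else 0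

lemma entry_formula {n : ℕ} (V : Matrix (Fin n) (Fin n) ℂ) (d : Fin n → ℝ) (k : Fin n) :
    ((star V * diagonal ((RCLike.ofReal : ℝ → ℂ) ∘ d) * V) k k).re
      = ∑ j, Complex.normSq (V j k) * d j := by
  have hd : ((RCLike.ofReal : ℝ → ℂ) ∘ d) = fun j => ((d j : ℝ) : ℂ) := rfl
  rw [hd]
  have h : (star V * diagonal (fun j => ((d j : ℝ) : ℂ)) * V) k k
      = ∑ j, ((Complex.normSq (V j k) : ℂ) * (d j : ℂ)) := by
    simp only [mul_apply, Matrix.star_apply, diagonal_apply, Finset.sum_mul]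
    rw [Finset.sum_comm]
    refine Finset.sum_congr rfl fun j _ => ?_
    simp [Finset.mul_sum]
    rw [mul_right_comm, ← Complex.normSq_eq_conj_mul_self]
  rw [h]
  simp [Complex.re_sum]

lemma col_sum {n : ℕ} (V : Matrix (Fin n) (Fin n) ℂ) (hV : star V * V = 1) (k : Fin n) :
    ∑ j, Complex.normSq (V j k) = 1 := by
  have h : ((star V * V) k k).re = 1 := by rw [hV]; simp [Matrix.one_apply]
  rw [← h]
  simp only [mul_apply, Matrix.star_apply, Complex.re_sum]
  refine Finset.sum_congr rfl fun j _ => ?_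
  rw [Complex.star_def, ← Complex.normSq_eq_conj_mul_self, Complex.ofReal_re]

lemma row_sum {n : ℕ} (V : Matrix (Fin n) (Fin n) ℂ) (hV : V * star V = 1) (j : Fin n) :
    ∑ k, Complex.normSq (V j k) = 1 := by
  have h := col_sum (star V) (by simpa using hV) j
  simpa [Matrix.star_apply, Complex.normSq_conj] using h

lemma vN_le_diag {n : ℕ} {A : Matrix (Fin n) (Fin n) ℂ} (hA : A.PosSemidef)
    (U : Matrix.unitaryGroup (Fin n) ℂ) :
    vN A ≤ ∑ k, Real.negMulLog
      (((star (U : Matrix (Fin n) (Fin n) ℂ) * A * (U : Matrix (Fin n) (Fin n) ℂ)) k k).re) := by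
  classical
  set U' : Matrix (Fin n) (Fin n) ℂ := (U : Matrix (Fin n) (Fin n) ℂ) with hU'
  set W : Matrix (Fin n) (Fin n) ℂ := (hA.1.eigenvectorUnitary : Matrix (Fin n) (Fin n) ℂ) with hW
  set V : Matrix (Fin n) (Fin n) ℂ := star W * U' with hVdef
  have hWW : W * star W = 1 := Unitary.mul_star_self_of_mem hA.1.eigenvectorUnitary.2
  have hWW' : star W * W = 1 := Unitary.star_mul_self_of_mem hA.1.eigenvectorUnitary.2
  have hUU : U' * star U' = 1 := Unitary.mul_star_self_of_mem U.2
  have hUU' : star U' * U' = 1 := Unitary.star_mul_self_of_mem U.2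
  have hVstar : star V = star U' * W := by rw [hVdef, Matrix.star_mul, star_star]
  have hVV : star V * V = 1 := by
    rw [hVstar, hVdef, mul_assoc, ← mul_assoc W, hWW, one_mul, hUU']
  have hVV' : V * star V = 1 := by
    rw [hVstar, hVdef, mul_assoc, ← mul_assoc U', hUU, one_mul, hWW']
  have hconj : star U' * A * U'
      = star V * diagonal ((RCLike.ofReal : ℝ → ℂ) ∘ hA.1.eigenvalues) * V := by
    conv_lhs => rw [hA.1.spectral_theorem, Unitary.conjStarAlgAut_apply]
    rw [hVstar, hVdef]
    noncomm_ring
  have hdiag : ∀ k, ((star U' * A * U') k k).re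
      = ∑ j, Complex.normSq (V j k) * hA.1.eigenvalues j := by
    intro k; rw [hconj]; exact entry_formula V _ k
  have hEig : ∀ j, 0 ≤ hA.1.eigenvalues j := hA.eigenvalues_nonneg
  rw [vN, dif_pos hA.1]
  have step1 : ∀ k, ∑ j, Complex.normSq (V j k) * Real.negMulLog (hA.1.eigenvalues j)
      ≤ Real.negMulLog (((star U' * A * U') k k).re) := by
    intro k
    rw [hdiag]
    have := Real.concaveOn_negMulLog.le_map_sum (t := Finset.univ)
      (w := fun j => Complex.normSq (V j k)) (p := fun j => hA.1.eigenvalues j)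
      (fun j _ => Complex.normSq_nonneg _) (col_sum V hVV k) (fun j _ => hEig j)
    simpa [smul_eq_mul] using this
  calc ∑ j, Real.negMulLog (hA.1.eigenvalues j)
      = ∑ j, (∑ k, Complex.normSq (V j k)) * Real.negMulLog (hA.1.eigenvalues j) := by
        refine Finset.sum_congr rfl fun j _ => ?_; rw [row_sum V hVV' j, one_mul]
    _ = ∑ k, ∑ j, Complex.normSq (V j k) * Real.negMulLog (hA.1.eigenvalues j) := by
        rw [Finset.sum_comm]; simp [Finset.sum_mul]
    _ ≤ _ := Finset.sum_le_sum fun k _ => step1 k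

lemma diag_entry_nonneg {n : ℕ} {M : Matrix (Fin n) (Fin n) ℂ} (hM : M.PosSemidef) (k : Fin n) :
    0 ≤ (M k k).re := by
  have h := hM.re_dotProduct_nonneg (Pi.single k 1)
  simpa [dotProduct, mulVec, Pi.single_apply, Finset.sum_ite_eq, Finset.sum_ite_eq'] using h

theorem vonNeumann_entropy_concave
    (n m : ℕ) (ρ : Fin m → Matrix (Fin n) (Fin n) ℂ)
    (hpsd : ∀ i, (ρ i).PosSemidef) (htr : ∀ i, (ρ i).trace = 1)
    (p : Fin m → ℝ) (hp : ∀ i, 0 ≤ p i) (hps : ∑ i, p i = 1) :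
    ∑ i, p i * vN (ρ i) ≤ vN (∑ i, (p i : ℂ) • ρ i) := by
  classical
  set σ : Matrix (Fin n) (Fin n) ℂ := ∑ i, (p i : ℂ) • ρ i with hσdef
  have hσ : σ.PosSemidef := by
    refine Matrix.PosSemidef.of_dotProduct_mulVec_nonneg ?_ ?_
    · unfold Matrix.IsHermitian
      rw [hσdef, conjTranspose_sum]
      refine Finset.sum_congr rfl fun i _ => ?_
      rw [conjTranspose_smul, (hpsd i).1]
      congr 1
      simp
    · intro x
      have hmv : (∑ i, (p i : ℂ) • ρ i) *ᵥ x = ∑ i, ((p i : ℂ) • ρ i) *ᵥ x := by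
        funext k
        simp [Matrix.mulVec, dotProduct, Finset.sum_apply, Matrix.sum_apply, Finset.sum_mul]
        rw [Finset.sum_comm]
      have hd2 : star x ⬝ᵥ (∑ i, ((p i : ℂ) • ρ i) *ᵥ x)
          = ∑ i, star x ⬝ᵥ (((p i : ℂ) • ρ i) *ᵥ x) := by
        simp only [dotProduct, Finset.sum_apply, Finset.mul_sum]
        rw [Finset.sum_comm]
      rw [hσdef, hmv, hd2]
      refine Finset.sum_nonneg fun i _ => ?_
      rw [Matrix.smul_mulVec, dotProduct_smul, smul_eq_mul]
      exact mul_nonneg (by exact_mod_cast hp i) ((hpsd i).dotProduct_mulVec_nonneg x)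
  set U : Matrix.unitaryGroup (Fin n) ℂ := hσ.1.eigenvectorUnitary with hUdef
  set U' : Matrix (Fin n) (Fin n) ℂ := (U : Matrix (Fin n) (Fin n) ℂ) with hU'
  have hUU : U' * star U' = 1 := Unitary.mul_star_self_of_mem U.2
  set a : Fin m → Fin n → ℝ := fun i k => ((star U' * ρ i * U') k k).re with ha
  have hconjpsd : ∀ i, (star U' * ρ i * U').PosSemidef := by
    intro i
    have := (hpsd i).conjTranspose_mul_mul_same U'
    simpa [Matrix.star_eq_conjTranspose] using this
  have hanonneg : ∀ i k, 0 ≤ a i k := fun i k => diag_entry_nonneg (hconjpsd i) k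
  have hasum : ∀ i, ∑ k, a i k = 1 := by
    intro i
    have htr' : (star U' * ρ i * U').trace = 1 := by
      rw [Matrix.trace_mul_comm, ← mul_assoc, hUU, one_mul, htr i]
    have : ∑ k, (star U' * ρ i * U') k k = 1 := htr'
    calc ∑ k, a i k = (∑ k, (star U' * ρ i * U') k k).re := by simp [ha, Complex.re_sum]
      _ = 1 := by rw [this]; simp
  have hq : ∀ k, hσ.1.eigenvalues k = ∑ i, p i * a i k := by
    intro k
    have hd : star U' * σ * U' = diagonal ((RCLike.ofReal : ℝ → ℂ) ∘ hσ.1.eigenvalues) := by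
      have := hσ.1.conjStarAlgAut_star_eigenvectorUnitary
      rwa [Unitary.conjStarAlgAut_star_apply] at this
    have hsplit : star U' * σ * U' = ∑ i, (p i : ℂ) • (star U' * ρ i * U') := by
      rw [hσdef, Finset.mul_sum, Finset.sum_mul]
      refine Finset.sum_congr rfl fun i _ => ?_
      rw [Matrix.mul_smul, Matrix.smul_mul]
    have h1 : ((star U' * σ * U') k k).re = hσ.1.eigenvalues k := by
      rw [hd]; simp [diagonal_apply]
    have h2 : ((star U' * σ * U') k k).re = ∑ i, p i * a i k := by
      rw [hsplit]
      simp only [Finset.sum_apply, Matrix.sum_apply, Matrix.smul_apply, smul_eq_mul,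
        Complex.re_sum, Complex.mul_re, Complex.ofReal_re, Complex.ofReal_im]
      simp [ha]
    rw [← h1, h2]
  have step1 : ∀ k, ∑ i, p i * Real.negMulLog (a i k)
      ≤ Real.negMulLog (hσ.1.eigenvalues k) := by
    intro k
    rw [hq k]
    have := Real.concaveOn_negMulLog.le_map_sum (t := Finset.univ)
      (w := p) (p := fun i => a i k)
      (fun i _ => hp i) hps (fun i _ => hanonneg i k)
    simpa [smul_eq_mul] using this
  have step2 : ∀ i, p i * vN (ρ i) ≤ p i * ∑ k, Real.negMulLog (a i k) := by
    intro i
    exact mul_le_mul_of_nonneg_left (vN_le_diag (hpsd i) U) (hp i)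
  calc ∑ i, p i * vN (ρ i) ≤ ∑ i, p i * ∑ k, Real.negMulLog (a i k) :=
        Finset.sum_le_sum fun i _ => step2 i
    _ = ∑ k, ∑ i, p i * Real.negMulLog (a i k) := by
        rw [Finset.sum_comm]
        refine Finset.sum_congr rfl fun i _ => ?_
        rw [Finset.mul_sum]
    _ ≤ ∑ k, Real.negMulLog (hσ.1.eigenvalues k) := Finset.sum_le_sum fun k _ => step1 k
    _ = vN σ := by rw [vN, dif_pos hσ.1]
end
end

section
/- Let ρ_1, …, ρ_m be n×n density matrices and p_1, …, p_m strictly positive reals with Σ_i p_i = 1. If the von Neumann entropy satisfies S(Σ_i p_i ρ_i) = Σ_i p_i S(ρ_i), then all the ρ_i are equal: ρ_i = ρ_j for all i, j (strict concavity of the von Neumann entropy). -/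
open Matrix
open scoped Classical ComplexOrder

noncomputable section

private lemma conj_diag_entry {n : ℕ} (M : Matrix (Fin n) (Fin n) ℂ) (d : Fin n → ℝ)
    (k l : Fin n) :
    (M * Matrix.diagonal (fun j => ((d j : ℝ) : ℂ)) * Mᴴ) k l
      = ∑ j, M k j * ((d j : ℝ) : ℂ) * star (M l j) := by
  rw [Matrix.mul_apply]
  refine Finset.sum_congr rfl fun j _ => ?_
  rw [Matrix.mul_diagonal, Matrix.conjTranspose_apply]

set_option maxHeartbeats 1000000 in
theorem vonNeumann_entropy_strictly_concave
    (n m : ℕ) (ρ : Fin m → Matrix (Fin n) (Fin n) ℂ)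
    (hpsd : ∀ i, (ρ i).PosSemidef) (htr : ∀ i, (ρ i).trace = 1)
    (p : Fin m → ℝ) (hp : ∀ i, 0 < p i) (hps : ∑ i, p i = 1)
    (heq : vN (∑ i, (p i : ℂ) • ρ i) = ∑ i, p i * vN (ρ i)) :
    ∀ i j, ρ i = ρ j := by
  intro i₀ j₀
  set σ : Matrix (Fin n) (Fin n) ℂ := ∑ i, (p i : ℂ) • ρ i with hσdef
  have hσ : σ.IsHermitian := by
    rw [Matrix.IsHermitian, hσdef, Matrix.conjTranspose_sum]
    refine Finset.sum_congr rfl fun i _ => ?_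
    rw [Matrix.conjTranspose_smul, (hpsd i).isHermitian.eq]
    norm_num
  set lam : Fin n → ℝ := hσ.eigenvalues with hlam_def
  set U : Matrix (Fin n) (Fin n) ℂ := (hσ.eigenvectorUnitary : Matrix (Fin n) (Fin n) ℂ)
    with hU_def
  have hUU : U * star U = 1 := Matrix.mem_unitaryGroup_iff.mp hσ.eigenvectorUnitary.2
  have hUU' : star U * U = 1 := Matrix.mem_unitaryGroup_iff'.mp hσ.eigenvectorUnitary.2
  set W : Fin m → Matrix (Fin n) (Fin n) ℂ :=
    fun i => ((hpsd i).isHermitian.eigenvectorUnitary : Matrix (Fin n) (Fin n) ℂ) with hW_def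
  set mu : Fin m → Fin n → ℝ := fun i => (hpsd i).isHermitian.eigenvalues with hmu_def
  have hWW : ∀ i, W i * star (W i) = 1 := fun i =>
    Matrix.mem_unitaryGroup_iff.mp (hpsd i).isHermitian.eigenvectorUnitary.2
  have hWW' : ∀ i, star (W i) * W i = 1 := fun i =>
    Matrix.mem_unitaryGroup_iff'.mp (hpsd i).isHermitian.eigenvectorUnitary.2
  set M : Fin m → Matrix (Fin n) (Fin n) ℂ := fun i => star U * W i with hM_def
  have hMM : ∀ i, M i * star (M i) = 1 := by
    intro i
    simp only [hM_def, Matrix.star_mul, star_star]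
    calc (star U * W i) * (star (W i) * U)
        = star U * (W i * star (W i)) * U := by simp only [Matrix.mul_assoc]
      _ = 1 := by rw [hWW i, Matrix.mul_one, hUU']
  have hMM' : ∀ i, star (M i) * M i = 1 := by
    intro i
    simp only [hM_def, Matrix.star_mul, star_star]
    calc (star (W i) * U) * (star U * W i)
        = star (W i) * (U * star U) * W i := by simp only [Matrix.mul_assoc]
      _ = 1 := by rw [hUU, Matrix.mul_one, hWW' i]
  have hspec : ∀ i, star U * ρ i * U
      = M i * Matrix.diagonal (fun j => ((mu i j : ℝ) : ℂ)) * (M i)ᴴ := by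
    intro i
    have h1 : ρ i = W i * Matrix.diagonal (fun j => ((mu i j : ℝ) : ℂ)) * star (W i) :=
      (hpsd i).isHermitian.spectral_theorem
    rw [← Matrix.star_eq_conjTranspose]
    simp only [hM_def, Matrix.star_mul, star_star]
    conv_lhs => rw [h1]
    simp only [Matrix.mul_assoc]
  set B : Fin m → Fin n → Fin n → ℝ := fun i k j => Complex.normSq (M i k j) with hB_def
  set a : Fin m → Fin n → ℝ := fun i k => ∑ j, B i k j * mu i j with ha_def
  have hB0 : ∀ i k j, 0 ≤ B i k j := fun i k j => Complex.normSq_nonneg _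
  have hmu0 : ∀ i j, 0 ≤ mu i j := fun i j => (hpsd i).eigenvalues_nonneg j
  have ha0 : ∀ i k, 0 ≤ a i k := fun i k =>
    Finset.sum_nonneg fun j _ => mul_nonneg (hB0 i k j) (hmu0 i j)
  have hentry : ∀ i k l, (star U * ρ i * U) k l
      = ∑ j, M i k j * ((mu i j : ℝ) : ℂ) * star (M i l j) := by
    intro i k l
    rw [hspec i, conj_diag_entry]
  have haC : ∀ i k, (star U * ρ i * U) k k = ((a i k : ℝ) : ℂ) := by
    intro i k
    rw [hentry i k k]
    simp only [ha_def, hB_def]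
    push_cast
    refine Finset.sum_congr rfl fun j _ => ?_
    rw [Complex.star_def, mul_right_comm, Complex.mul_conj]
  have hrow : ∀ i k, ∑ j, B i k j = 1 := by
    intro i k
    have h1 : (M i * star (M i)) k k = 1 := by rw [hMM i]; simp
    rw [Matrix.mul_apply] at h1
    have h2 : ∑ j, ((B i k j : ℝ) : ℂ) = 1 := by
      rw [← h1]
      refine Finset.sum_congr rfl fun j _ => ?_
      rw [Matrix.star_apply, Complex.star_def, Complex.mul_conj]
    exact_mod_cast h2
  have hcol : ∀ i j, ∑ k, B i k j = 1 := by
    intro i j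
    have h1 : (star (M i) * M i) j j = 1 := by rw [hMM' i]; simp
    rw [Matrix.mul_apply] at h1
    have h2 : ∑ k, ((B i k j : ℝ) : ℂ) = 1 := by
      rw [← h1]
      refine Finset.sum_congr rfl fun k _ => ?_
      rw [Matrix.star_apply, Complex.star_def, mul_comm, Complex.mul_conj]
    exact_mod_cast h2
  have hdiagσ : star U * σ * U = Matrix.diagonal (fun k => ((lam k : ℝ) : ℂ)) :=
    by have := hσ.conjStarAlgAut_star_eigenvectorUnitary; rw [Unitary.conjStarAlgAut_star_apply] at this; exact this
  have hlam_sum : ∀ k, lam k = ∑ i, p i * a i k := by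
    intro k
    have h2 : star U * σ * U = ∑ i, (p i : ℂ) • (star U * ρ i * U) := by
      rw [hσdef]
      simp only [Matrix.mul_sum, Matrix.sum_mul, Matrix.mul_smul, Matrix.smul_mul]
    have h1 : ((lam k : ℝ) : ℂ) = ∑ i, (p i : ℂ) * ((a i k : ℝ) : ℂ) := by
      rw [← Finset.sum_congr rfl (fun i _ => by rw [← haC i k])]
      have h3 := congrArg (fun A : Matrix (Fin n) (Fin n) ℂ => A k k) (h2.symm.trans hdiagσ)
      simpa [Matrix.sum_apply, Matrix.diagonal_apply_eq] using h3.symm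
    exact_mod_cast h1
  have hvNσ : vN σ = ∑ k, Real.negMulLog (lam k) := by rw [vN, dif_pos hσ]
  have hvNρ : ∀ i, vN (ρ i) = ∑ j, Real.negMulLog (mu i j) := fun i => by
    rw [vN, dif_pos (hpsd i).isHermitian]
  have hconc := Real.strictConcaveOn_negMulLog
  have stepA : ∀ k, ∑ i, p i * Real.negMulLog (a i k) ≤ Real.negMulLog (lam k) := by
    intro k
    rw [hlam_sum k]
    have := hconc.concaveOn.le_map_sum (t := Finset.univ) (w := p) (p := fun i => a i k)
      (fun i _ => (hp i).le) hps (fun i _ => ha0 i k)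
    simpa using this
  have stepB : ∀ i k, ∑ j, B i k j * Real.negMulLog (mu i j) ≤ Real.negMulLog (a i k) := by
    intro i k
    have := hconc.concaveOn.le_map_sum (t := Finset.univ) (w := B i k) (p := mu i)
      (fun j _ => hB0 i k j) (hrow i k) (fun j _ => hmu0 i j)
    simpa [ha_def] using this
  have hcolsum : ∀ i, ∑ k, ∑ j, B i k j * Real.negMulLog (mu i j)
      = ∑ j, Real.negMulLog (mu i j) := by
    intro i
    rw [Finset.sum_comm]
    refine Finset.sum_congr rfl fun j _ => ?_
    rw [← Finset.sum_mul, hcol i j, one_mul]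
  set X : ℝ := ∑ k, (Real.negMulLog (lam k) - ∑ i, p i * Real.negMulLog (a i k)) with hX_def
  set Y : Fin m → ℝ := fun i =>
    ∑ k, (Real.negMulLog (a i k) - ∑ j, B i k j * Real.negMulLog (mu i j)) with hY_def
  have hX0 : 0 ≤ X := Finset.sum_nonneg fun k _ => sub_nonneg.2 (stepA k)
  have hY0 : ∀ i, 0 ≤ Y i := fun i => Finset.sum_nonneg fun k _ => sub_nonneg.2 (stepB i k)
  have htotal : X + ∑ i, p i * Y i = 0 := by
    have e1 : X = (∑ k, Real.negMulLog (lam k))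
        - ∑ i, p i * (∑ k, Real.negMulLog (a i k)) := by
      rw [hX_def, Finset.sum_sub_distrib, Finset.sum_comm]
      congr 1
      refine Finset.sum_congr rfl fun i _ => ?_
      rw [Finset.mul_sum]
    have e2 : ∀ i, p i * Y i
        = p i * (∑ k, Real.negMulLog (a i k)) - p i * vN (ρ i) := by
      intro i
      simp only [hY_def]
      rw [Finset.sum_sub_distrib, hcolsum i, hvNρ i, mul_sub]
    rw [e1, Finset.sum_congr rfl (fun i _ => e2 i), Finset.sum_sub_distrib]
    rw [← hvNσ, heq]
    ring
  have hsY0 : 0 ≤ ∑ i, p i * Y i :=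
    Finset.sum_nonneg fun i _ => mul_nonneg (hp i).le (hY0 i)
  have hXzero : X = 0 := le_antisymm (by linarith) hX0
  have hYzero : ∀ i, Y i = 0 := by
    have hs : ∑ i, p i * Y i = 0 := by linarith
    intro i
    have h := (Finset.sum_eq_zero_iff_of_nonneg
      (fun i _ => mul_nonneg (hp i).le (hY0 i))).mp hs i (Finset.mem_univ i)
    rcases mul_eq_zero.mp h with h' | h'
    · exact absurd h' (hp i).ne'
    · exact h'
  have hAeq : ∀ k, Real.negMulLog (lam k) = ∑ i, p i * Real.negMulLog (a i k) := by
    intro k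
    have h := (Finset.sum_eq_zero_iff_of_nonneg
      (fun k _ => sub_nonneg.2 (stepA k))).mp hXzero k (Finset.mem_univ k)
    linarith [h]
  have hBeq : ∀ i k, Real.negMulLog (a i k)
      = ∑ j, B i k j * Real.negMulLog (mu i j) := by
    intro i k
    have h := (Finset.sum_eq_zero_iff_of_nonneg
      (fun k _ => sub_nonneg.2 (stepB i k))).mp (hYzero i) k (Finset.mem_univ k)
    linarith [h]
  have halam : ∀ i k, a i k = lam k := by
    intro i k
    have h_eq : Real.negMulLog (∑ i', p i' • a i' k) = ∑ i', p i' • Real.negMulLog (a i' k) := by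
      simpa [← hlam_sum k] using hAeq k
    have hall := hconc.eq_of_map_sum_eq (t := Finset.univ) (w := p) (p := fun i' => a i' k)
      (fun i' _ => hp i') hps (fun i' _ => ha0 i' k) h_eq.le
    rw [hlam_sum k]
    calc a i k = ∑ i', p i' * a i k := by rw [← Finset.sum_mul, hps, one_mul]
      _ = ∑ i', p i' * a i' k := Finset.sum_congr rfl fun i' _ => by
        rw [hall (Finset.mem_univ i) (Finset.mem_univ i')]
  have hmu_lam : ∀ i k j, B i k j ≠ 0 → mu i j = lam k := by
    intro i k j hBj
    set t := Finset.univ.filter (fun j' => B i k j' ≠ 0) with ht_def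
    have hjt : j ∈ t := by simp [ht_def, hBj]
    have hsum_t : ∑ j' ∈ t, B i k j' = 1 := by
      rw [ht_def, Finset.sum_filter_of_ne (fun x _ h => h), hrow i k]
    have hat : a i k = ∑ j' ∈ t, B i k j' * mu i j' := by
      simp only [ha_def]
      rw [ht_def]
      symm
      exact Finset.sum_filter_of_ne (fun x _ hx h => hx (by rw [h, zero_mul]))
    have hat2 : ∑ j' ∈ t, B i k j' * Real.negMulLog (mu i j')
        = ∑ j', B i k j' * Real.negMulLog (mu i j') := by
      rw [ht_def]
      exact Finset.sum_filter_of_ne (fun x _ hx h => hx (by rw [h, zero_mul]))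
    have h_eq : Real.negMulLog (∑ j' ∈ t, B i k j' • mu i j')
        = ∑ j' ∈ t, B i k j' • Real.negMulLog (mu i j') := by
      simpa [← hat, hat2] using hBeq i k
    have hposw : ∀ j' ∈ t, 0 < B i k j' := by
      intro j' hj'
      have : B i k j' ≠ 0 := by simpa [ht_def] using hj'
      exact (hB0 i k j').lt_of_ne (Ne.symm this)
    have hall := hconc.eq_of_map_sum_eq hposw hsum_t (fun j' _ => hmu0 i j') h_eq.le
    have hmain : a i k = mu i j := by
      rw [hat]
      calc ∑ j' ∈ t, B i k j' * mu i j' = ∑ j' ∈ t, B i k j' * mu i j :=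
            Finset.sum_congr rfl fun j' hj' => by rw [hall hj' hjt]
        _ = mu i j := by rw [← Finset.sum_mul, hsum_t, one_mul]
    rw [← hmain, halam i k]
  have hfinal : ∀ i, star U * ρ i * U = star U * σ * U := by
    intro i
    rw [hdiagσ]
    ext k l
    rw [hentry i k l]
    have hterm : ∀ j, M i k j * ((mu i j : ℝ) : ℂ) * star (M i l j)
        = M i k j * ((lam k : ℝ) : ℂ) * star (M i l j) := by
      intro j
      by_cases hz : M i k j = 0
      · rw [hz, zero_mul, zero_mul, zero_mul, zero_mul]
      · have hBnz : B i k j ≠ 0 := by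
          simp only [hB_def]
          exact fun h => hz (Complex.normSq_eq_zero.mp h)
        rw [hmu_lam i k j hBnz]
    rw [Finset.sum_congr rfl (fun j _ => hterm j)]
    have h1 : (M i * star (M i)) k l = ∑ j, M i k j * star (M i l j) := by
      rw [Matrix.mul_apply]
      exact Finset.sum_congr rfl fun j _ => by rw [Matrix.star_apply]
    have h2 : ∑ j, M i k j * ((lam k : ℝ) : ℂ) * star (M i l j)
        = ((lam k : ℝ) : ℂ) * ∑ j, M i k j * star (M i l j) := by
      rw [Finset.mul_sum]
      exact Finset.sum_congr rfl fun j _ => by ring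
    rw [h2, ← h1, hMM i]
    by_cases hkl : k = l
    · subst hkl; simp [Matrix.one_apply, Matrix.diagonal_apply]
    · simp [Matrix.one_apply, Matrix.diagonal_apply, hkl]
  have cancel : ∀ A : Matrix (Fin n) (Fin n) ℂ, U * (star U * A * U) * star U = A := by
    intro A
    calc U * (star U * A * U) * star U = (U * star U) * A * (U * star U) := by
          simp only [Matrix.mul_assoc]
      _ = A := by rw [hUU, Matrix.one_mul, Matrix.mul_one]
  have hrho : ∀ i, ρ i = σ := by
    intro i
    have h := congrArg (fun A : Matrix (Fin n) (Fin n) ℂ => U * A * star U) (hfinal i)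
    simpa [cancel] using h
  exact (hrho i₀).trans (hrho j₀).symm
end
end

section
/- Let d ≥ 1, let ρ be a density matrix on ℂ^d ⊗ ℂ^d, let p_1, …, p_m be strictly positive reals with Σ_i p_i = 1, and let U_i, W_i be d×d unitary matrices. If Σ_i p_i (U_i ⊗ W_i) ρ (U_i ⊗ W_i)† = V ρ V†, then for every i one has (U_i ⊗ W_i) ρ (U_i ⊗ W_i)† = V ρ V†; in particular the swap of ρ can then be realized by a single product unitary. -/
/-! Conjugation by a unitary preserves the Hilbert–Schmidt norm `‖X‖² = tr (Xᴴ X)`, so each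
`Aᵢ = (Uᵢ ⊗ Wᵢ) ρ (Uᵢ ⊗ Wᵢ)ᴴ` has the same norm as `B = V ρ Vᴴ`. Since `B = ∑ pᵢ Aᵢ` is a convex
combination, `∑ pᵢ ‖Aᵢ - B‖² = ∑ pᵢ ‖Aᵢ‖² - ‖B‖² = 0`, and positivity of the weights forces
`Aᵢ = B` for every `i`. -/

open Matrix Kronecker
open scoped Classical ComplexOrder

noncomputable section

namespace Matrix

variable {ι m n R : Type*} [Fintype m] [Fintype n]

theorem sum_mul_trace_conjTranspose_mul_sub [CommRing R] [StarRing R] (s : Finset ι)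
    (w : ι → R) (hw : ∀ i ∈ s, IsSelfAdjoint (w i)) (hw₁ : ∑ i ∈ s, w i = 1)
    (A : ι → Matrix m n R) {B : Matrix m n R} (hB : ∑ i ∈ s, w i • A i = B) :
    ∑ i ∈ s, w i * ((A i - B)ᴴ * (A i - B)).trace
      = ∑ i ∈ s, w i * ((A i)ᴴ * A i).trace - (Bᴴ * B).trace := by
  have hBH : ∑ i ∈ s, w i • (A i)ᴴ = Bᴴ := by
    rw [← hB, conjTranspose_sum]
    exact Finset.sum_congr rfl fun i hi => by rw [conjTranspose_smul, (hw i hi).star_eq]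
  have hleft : ∑ i ∈ s, w i * ((A i)ᴴ * B).trace = (Bᴴ * B).trace := by
    simp only [← hBH, Matrix.sum_mul, trace_sum, smul_mul, trace_smul, smul_eq_mul]
  have hright : ∑ i ∈ s, w i * (Bᴴ * A i).trace = (Bᴴ * B).trace := by
    nth_rw 3 [← hB]
    simp only [Matrix.mul_sum, trace_sum, Matrix.mul_smul, trace_smul, smul_eq_mul]
  have hconst : ∑ i ∈ s, w i * (Bᴴ * B).trace = (Bᴴ * B).trace := by
    rw [← Finset.sum_mul, hw₁, one_mul]
  simp only [conjTranspose_sub, Matrix.sub_mul, Matrix.mul_sub, trace_sub, mul_sub,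
    Finset.sum_sub_distrib, hleft, hright, hconst, sub_self, sub_zero]

theorem eq_of_sum_smul_eq_of_trace_conjTranspose_mul_self_le [CommRing R] [PartialOrder R]
    [StarRing R] [StarOrderedRing R] [IsOrderedRing R] [NoZeroDivisors R] (s : Finset ι) (w : ι → R)
    (hw : ∀ i ∈ s, 0 < w i) (hw₁ : ∑ i ∈ s, w i = 1) (A : ι → Matrix m n R)
    {B : Matrix m n R} (hB : ∑ i ∈ s, w i • A i = B)
    (hA : ∀ i ∈ s, ((A i)ᴴ * A i).trace ≤ (Bᴴ * B).trace) :
    ∀ i ∈ s, A i = B := by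
  have hdev : ∑ i ∈ s, w i * ((A i - B)ᴴ * (A i - B)).trace ≤ 0 := by
    rw [sum_mul_trace_conjTranspose_mul_sub s w (fun i hi => (hw i hi).le.isSelfAdjoint) hw₁ A hB,
      sub_nonpos]
    calc ∑ i ∈ s, w i * ((A i)ᴴ * A i).trace
        ≤ ∑ i ∈ s, w i * (Bᴴ * B).trace :=
          Finset.sum_le_sum fun i hi => mul_le_mul_of_nonneg_left (hA i hi) (hw i hi).le
      _ = (Bᴴ * B).trace := by rw [← Finset.sum_mul, hw₁, one_mul]
  have hterm_nonneg : ∀ i ∈ s, 0 ≤ w i * ((A i - B)ᴴ * (A i - B)).trace := fun i hi =>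
    mul_nonneg (hw i hi).le (posSemidef_conjTranspose_mul_self _).trace_nonneg
  intro i hi
  have hterm := (Finset.sum_eq_zero_iff_of_nonneg hterm_nonneg).mp
    (hdev.antisymm (Finset.sum_nonneg hterm_nonneg)) i hi
  rw [mul_eq_zero, or_iff_right (hw i hi).ne', trace_conjTranspose_mul_self_eq_zero_iff] at hterm
  exact sub_eq_zero.mp hterm

theorem trace_conjTranspose_mul_self_unitary_conj [CommRing R] [StarRing R] [DecidableEq n]
    {U : Matrix n n R} (hU : U ∈ unitary (Matrix n n R)) (X : Matrix n n R) :
    ((U * X * Uᴴ)ᴴ * (U * X * Uᴴ)).trace = (Xᴴ * X).trace := by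
  have hUU : Uᴴ * U = 1 := Unitary.star_mul_self_of_mem hU
  calc ((U * X * Uᴴ)ᴴ * (U * X * Uᴴ)).trace = (U * (Xᴴ * X) * Uᴴ).trace := by
        simp only [conjTranspose_mul, conjTranspose_conjTranspose, Matrix.mul_assoc]
        rw [← Matrix.mul_assoc Uᴴ U, hUU, Matrix.one_mul]
    _ = (Xᴴ * X).trace := by
        rw [trace_mul_cycle, hUU, Matrix.one_mul]

end Matrix

theorem conjTranspose_swapV (d : ℕ) : (swapV d)ᴴ = swapV d := by
  ext x y
  simp only [conjTranspose_apply, swapV, apply_ite star, star_one, star_zero, eq_comm, and_comm]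

theorem swapV_mul_self (d : ℕ) : swapV d * swapV d = 1 := by
  ext x y
  rw [mul_apply, Finset.sum_eq_single x.swap]
  · simp [swapV, one_apply, Prod.ext_iff, and_comm]
  · intro z _ hz
    have hxz : ¬(x.1 = z.2 ∧ x.2 = z.1) := fun h => hz (Prod.ext h.2.symm h.1.symm)
    simp [swapV, hxz]
  · simp

theorem swapV_mem_unitary (d : ℕ) : swapV d ∈ unitary (Matrix (Idx d) (Idx d) ℂ) := by
  rw [Unitary.mem_iff, star_eq_conjTranspose, conjTranspose_swapV, and_self]
  exact swapV_mul_self d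

theorem mixture_of_product_unitaries_swapping_implies_each_swaps_general
    (d : ℕ)
    (ρ : Matrix (Idx d) (Idx d) ℂ)
    (m : ℕ) (p : Fin m → ℝ) (hp : ∀ i, 0 < p i) (hps : ∑ i, p i = 1)
    (U W : Fin m → Matrix (Fin d) (Fin d) ℂ)
    (hU : ∀ i, U i ∈ Matrix.unitaryGroup (Fin d) ℂ)
    (hW : ∀ i, W i ∈ Matrix.unitaryGroup (Fin d) ℂ)
    (heq : ∑ i, (p i : ℂ) • ((U i ⊗ₖ W i) * ρ * (U i ⊗ₖ W i)ᴴ)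
            = swapV d * ρ * (swapV d)ᴴ) :
    ∀ i, (U i ⊗ₖ W i) * ρ * (U i ⊗ₖ W i)ᴴ = swapV d * ρ * (swapV d)ᴴ := by
  intro i
  refine eq_of_sum_smul_eq_of_trace_conjTranspose_mul_self_le Finset.univ (fun i => (p i : ℂ))
    (fun i _ => Complex.zero_lt_real.mpr (hp i)) (by exact_mod_cast hps) _ heq (fun j _ => ?_)
    i (Finset.mem_univ i)
  rw [trace_conjTranspose_mul_self_unitary_conj (kronecker_mem_unitary (hU j) (hW j)),
    trace_conjTranspose_mul_self_unitary_conj (swapV_mem_unitary d)]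

theorem mixture_of_product_unitaries_swapping_implies_each_swaps
    (d : ℕ) (hd : 1 ≤ d)
    (ρ : Matrix (Idx d) (Idx d) ℂ) (hpsd : ρ.PosSemidef) (htr : ρ.trace = 1)
    (m : ℕ) (p : Fin m → ℝ) (hp : ∀ i, 0 < p i) (hps : ∑ i, p i = 1)
    (U W : Fin m → Matrix (Fin d) (Fin d) ℂ)
    (hU : ∀ i, U i ∈ Matrix.unitaryGroup (Fin d) ℂ)
    (hW : ∀ i, W i ∈ Matrix.unitaryGroup (Fin d) ℂ)
    (heq : ∑ i, (p i : ℂ) • ((U i ⊗ₖ W i) * ρ * (U i ⊗ₖ W i)ᴴ)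
            = swapV d * ρ * (swapV d)ᴴ) :
    ∀ i, (U i ⊗ₖ W i) * ρ * (U i ⊗ₖ W i)ᴴ = swapV d * ρ * (swapV d)ᴴ :=
  mixture_of_product_unitaries_swapping_implies_each_swaps_general d ρ m p hp hps U W hU hW heq
end
end
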